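/- arXiv:2506.06246 — 4 statements merged into one kernel-verified Lean document; each statement's English description precedes it below -/
import Mathlib

section
/- Let p be a prime, k a perfect field of characteristic p, d ≥ 1 and n ≥ 0. Set A := k[t₁,…,t_d] and A_{n+1} := W_{n+1}(k)[t₁,…,t_d], with coefficientwise reduction π : A_{n+1} → A. Then: (1) there is a unique map w̃_n : W_{n+1}(A) → A_{n+1} such that w̃_n ∘ W_{n+1}(π) equals the n-th ghost map w_n : W_{n+1}(A_{n+1}) → A_{n+1}, (y₁,…,y_{n+1}) ↦ Σ_{i=0}^n pⁱ·y_{i+1}^{p^{n−i}}; explicitly, w̃_n(f₁,…,f_{n+1}) = Σ_{i=0}^n pⁱ·f̃_{i+1}^{p^{n−i}} for arbitrary lifts f̃_j ∈ A_{n+1} of the f_j along π, independently of the chosen lifts; (2) w̃_n is a ring homomorphism and is semilinear over the n-th iterate Φⁿ of the Witt-vector Frobenius of W_{n+1}(k), i.e. w̃_n(c·x) = Φⁿ(c)·w̃_n(x) for c ∈ W_{n+1}(k); (3) for every ring endomorphism F of A_{n+1} with π ∘ F = (·)^p ∘ π, one has F ∘ w̃_n = F̃^{n+1}, where F̃^{n+1}(f₁,…,f_{n+1})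 = Σ_{i=0}^n pⁱ·f̃_{i+1}^{p^{n+1−i}}; in particular F ∘ w̃_n does not depend on the choice of the Frobenius lift F; (4) w̃_n is injective, and for every 0 ≤ i ≤ n it maps the image of Vⁱ : W_{n+1−i}(A) → W_{n+1}(A) bijectively onto w̃_n(W_{n+1}(A)) ∩ pⁱ·A_{n+1}. -/
/-- The functorial ring homomorphism `W_n(R) →+* W_n(S)` induced by a ring homomorphism
`f : R →+* S`; it acts coefficientwise. -/
noncomputable def twMap (p : ℕ) [Fact p.Prime] {R S : Type*} [CommRing R] [CommRing S]
    (n : ℕ) (f : R →+* S) :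
    TruncatedWittVector p n R →+* TruncatedWittVector p n S :=
  (WittVector.truncate n).liftOfRightInverse TruncatedWittVector.out
    TruncatedWittVector.truncateFun_out
    ⟨(WittVector.truncate n).comp (WittVector.map f), fun x hx => by
      rw [WittVector.mem_ker_truncate] at hx
      rw [RingHom.mem_ker, RingHom.comp_apply, ← RingHom.mem_ker,
        WittVector.mem_ker_truncate]
      intro i hi
      rw [WittVector.map_coeff, hx i hi, map_zero]⟩

/-- The `i`-fold Verschiebung `Vⁱ : W_m(R) → W_N(R)` (obtained from the Verschiebung of the
untruncated Witt vectors; for `m + i = N` this is the usual map `Vⁱ : W_{N-i}(R) → W_N(R)`). -/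
noncomputable def vIter (p : ℕ) [Fact p.Prime] {R : Type*} [CommRing R] (N i : ℕ) {m : ℕ}
    (x : TruncatedWittVector p m R) : TruncatedWittVector p N R :=
  WittVector.truncate N ((fun y : WittVector p R => WittVector.verschiebung y)^[i] x.out)

open Function Finset

set_option linter.unusedSectionVars false
namespace Aux

variable (p : ℕ) [Fact p.Prime]

theorem twMap_apply_truncate {R S : Type*} [CommRing R] [CommRing S] (m : ℕ) (f : R →+* S)
    (x : WittVector p R) :
    twMap p m f (WittVector.truncate m x) = WittVector.truncate m (WittVector.map f x) :=
  RingHom.liftOfRightInverse_comp_apply _ _ _ _ _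

theorem truncate_out {R : Type*} [CommRing R] (m : ℕ) (x : TruncatedWittVector p m R) :
    WittVector.truncate m x.out = x := by
  ext i
  rw [WittVector.coeff_truncate, TruncatedWittVector.coeff_out]

theorem twMap_coeff {R S : Type*} [CommRing R] [CommRing S] (m : ℕ) (f : R →+* S)
    (y : TruncatedWittVector p m R) (i : Fin m) :
    (twMap p m f y).coeff i = f (y.coeff i) := by
  conv_lhs => rw [← truncate_out p m y]
  rw [twMap_apply_truncate, WittVector.coeff_truncate, WittVector.map_coeff,
    TruncatedWittVector.coeff_out]

theorem twMap_surjective {R S : Type*} [CommRing R] [CommRing S] (m : ℕ) (f : R →+* S)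
    (hf : Surjective f) : Surjective (twMap p m f) := by
  intro y
  obtain ⟨z, hz⟩ := WittVector.map_surjective f hf y.out
  exact ⟨WittVector.truncate m z, by rw [twMap_apply_truncate, hz, truncate_out]⟩

theorem iterate_verschiebung_coeff_lt {R : Type*} [CommRing R] (x : WittVector p R)
    {m j : ℕ} (h : j < m) : (WittVector.verschiebung^[m] x).coeff j = 0 := by
  induction m generalizing j with
  | zero => omega
  | succ m ih =>
    rw [Function.iterate_succ_apply']
    cases j with
    | zero => exact WittVector.verschiebung_coeff_zero _
    | succ j => rw [WittVector.verschiebung_coeff_succ]; exact ih (by omega)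

theorem frobenius_iterate_verschiebung {R : Type*} [CommRing R] [CharP R p] (i : ℕ)
    (x : WittVector p R) :
    WittVector.frobenius (WittVector.verschiebung^[i] x) =
      WittVector.verschiebung^[i] (WittVector.frobenius x) := by
  induction i with
  | zero => rfl
  | succ i ih =>
    rw [Function.iterate_succ_apply', Function.iterate_succ_apply',
      ← WittVector.verschiebung_frobenius_comm, ih]

theorem p_pow_mul {R : Type*} [CommRing R] [CharP R p] (i : ℕ) (y : WittVector p R) :
    (p : WittVector p R) ^ i * y =
      WittVector.verschiebung^[i] (WittVector.frobenius^[i] y) := by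
  induction i with
  | zero => simp
  | succ i ih =>
    calc (p : WittVector p R) ^ (i + 1) * y = ((p : WittVector p R) ^ i * y) * p := by ring
      _ = WittVector.verschiebung (WittVector.frobenius
            (WittVector.verschiebung^[i] (WittVector.frobenius^[i] y))) := by
          rw [ih, WittVector.verschiebung_frobenius]
      _ = WittVector.verschiebung^[i+1] (WittVector.frobenius^[i+1] y) := by
          rw [frobenius_iterate_verschiebung]
          simp only [Function.iterate_succ_apply']


theorem term_dvd {B : Type*} [CommRing B] (n : ℕ) {i : ℕ} (hi : i ≤ n) {a b : B}
    (h : (p : B) ∣ a - b) :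
    ((p : B) ^ (n + 1)) ∣ (p : B) ^ i * a ^ p ^ (n - i) - (p : B) ^ i * b ^ p ^ (n - i) := by
  rw [← mul_sub]
  have h2 := dvd_sub_pow_of_dvd_sub h (n - i)
  have h3 : (p : B) ^ (n + 1) = (p : B) ^ i * (p : B) ^ (n - i + 1) := by
    rw [← pow_add]; congr 1; omega
  rw [h3]
  exact mul_dvd_mul_left _ h2

theorem sum_congr_mod {B : Type*} [CommRing B] (n : ℕ) (hp0 : (p : B) ^ (n + 1) = 0)
    (a b : Fin (n + 1) → B) (h : ∀ i, (p : B) ∣ a i - b i) :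
    ∑ i : Fin (n + 1), (p : B) ^ (i : ℕ) * a i ^ p ^ (n - (i : ℕ)) =
      ∑ i : Fin (n + 1), (p : B) ^ (i : ℕ) * b i ^ p ^ (n - (i : ℕ)) := by
  rw [← sub_eq_zero, ← Finset.sum_sub_distrib]
  refine Finset.sum_eq_zero fun i _ => ?_
  obtain ⟨c, hc⟩ := term_dvd p n (Nat.lt_succ_iff.mp i.isLt) (h i)
  rw [hc, hp0, zero_mul]

theorem ghost_eq_sum {B : Type*} [CommRing B] (n : ℕ) (x : WittVector p B) :
    WittVector.ghostComponent n x
      = ∑ i ∈ Finset.range (n + 1), (p : B) ^ i * x.coeff i ^ p ^ (n - i) := by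
  rw [WittVector.ghostComponent_apply, wittPolynomial_eq_sum_C_mul_X_pow, map_sum]
  refine Finset.sum_congr rfl fun i _ => ?_
  simp [map_pow]

theorem ghost_zero_of_dvd {B : Type*} [CommRing B] (n : ℕ) (hp0 : (p : B) ^ (n + 1) = 0)
    (x : WittVector p B) (h : ∀ i, i ≤ n → (p : B) ∣ x.coeff i) :
    WittVector.ghostComponent n x = 0 := by
  rw [ghost_eq_sum]
  refine Finset.sum_eq_zero fun i hi => ?_
  rw [Finset.mem_range] at hi
  have hd : (p : B) ∣ x.coeff i - 0 := by rw [sub_zero]; exact h i (by omega)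
  obtain ⟨c, hc⟩ := dvd_sub_pow_of_dvd_sub hd (n - i)
  rw [zero_pow (pow_ne_zero _ (Nat.Prime.ne_zero Fact.out)), sub_zero] at hc
  rw [hc, ← mul_assoc, ← pow_add, show i + (n - i + 1) = n + 1 by omega, hp0, zero_mul]

section wtGen

variable {B Bbar : Type*} [CommRing B] [CommRing Bbar] (n : ℕ) (ρ : B →+* Bbar)

noncomputable def mlift (hρ : Surjective ρ) (x : WittVector p Bbar) : WittVector p B :=
  WittVector.mk p fun i => surjInv hρ (x.coeff i)

theorem map_mlift (hρ : Surjective ρ) (x : WittVector p Bbar) :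
    WittVector.map ρ (mlift p ρ hρ x) = x := by
  apply WittVector.ext fun i => ?_
  rw [WittVector.map_coeff, mlift, WittVector.coeff_mk]
  exact surjInv_eq hρ _

variable (hρ : Surjective ρ) (hker : ∀ a : B, ρ a = 0 → (p : B) ∣ a)
  (hp0 : (p : B) ^ (n + 1) = 0)

noncomputable def psi : WittVector p Bbar →+* B :=
  (WittVector.map ρ).liftOfRightInverse (mlift p ρ hρ) (map_mlift p ρ hρ)
    ⟨WittVector.ghostComponent n, fun x hx => by
      rw [RingHom.mem_ker] at hx ⊢
      refine ghost_zero_of_dvd p n hp0 x fun i _ => hker _ ?_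
      rw [← WittVector.map_coeff, hx, WittVector.zero_coeff]⟩

theorem psi_spec (y : WittVector p B) :
    psi p n ρ hρ hker hp0 (WittVector.map ρ y) = WittVector.ghostComponent n y :=
  RingHom.liftOfRightInverse_comp_apply _ _ _ _ _

noncomputable def wtGen : TruncatedWittVector p (n + 1) Bbar →+* B :=
  (WittVector.truncate (n + 1)).liftOfRightInverse TruncatedWittVector.out
    TruncatedWittVector.truncateFun_out
    ⟨psi p n ρ hρ hker hp0, fun x hx => by
      rw [WittVector.mem_ker_truncate] at hx
      rw [RingHom.mem_ker]
      conv_lhs => rw [← map_mlift p ρ hρ x]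
      rw [psi_spec]
      refine ghost_zero_of_dvd p n hp0 _ fun i hi => hker _ ?_
      rw [← WittVector.map_coeff, map_mlift, hx i (by omega)]⟩

theorem wtGen_truncate (z : WittVector p Bbar) :
    wtGen p n ρ hρ hker hp0 (WittVector.truncate (n + 1) z) = psi p n ρ hρ hker hp0 z :=
  RingHom.liftOfRightInverse_comp_apply _ _ _ _ _

theorem wtGen_spec (x : TruncatedWittVector p (n + 1) Bbar) (g : Fin (n + 1) → B)
    (hg : ∀ i, ρ (g i) = x.coeff i) :
    wtGen p n ρ hρ hker hp0 x
      = ∑ i : Fin (n + 1), (p : B) ^ (i : ℕ) * g i ^ p ^ (n - (i : ℕ)) := by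
  set Y : WittVector p B := WittVector.mk p (fun i => if h : i < n + 1 then g ⟨i, h⟩ else 0)
    with hYdef
  have hY : WittVector.truncate (n + 1) (WittVector.map ρ Y) = x := by
    ext i
    rw [WittVector.coeff_truncate, WittVector.map_coeff, hYdef, WittVector.coeff_mk]
    rw [dif_pos i.isLt]
    simpa using hg i
  rw [← hY, wtGen_truncate, psi_spec, ghost_eq_sum, Finset.sum_range]
  refine Finset.sum_congr rfl fun i _ => ?_
  rw [hYdef, WittVector.coeff_mk, dif_pos i.isLt]

end wtGen

section field

variable (k : Type*) [Field k] [CharP k p] [PerfectRing k p] (n : ℕ)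

theorem dvd_of_coeff_zero (c : TruncatedWittVector p (n + 1) k) (h : c.coeff 0 = 0) :
    (p : TruncatedWittVector p (n + 1) k) ∣ c := by
  have hC0 : c.out.coeff 0 = 0 := by
    simpa using (TruncatedWittVector.coeff_out c (0 : Fin (n + 1))).trans h
  set D := WittVector.mk p (fun i => c.out.coeff (i + 1)) with hD
  have hVD : WittVector.verschiebung D = c.out := by
    apply WittVector.ext fun i => ?_
    cases i with
    | zero => rw [WittVector.verschiebung_coeff_zero, hC0]
    | succ i => rw [WittVector.verschiebung_coeff_succ, hD, WittVector.coeff_mk]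
  set E := (WittVector.frobeniusEquiv p k).symm D with hEdef
  have hE : WittVector.frobenius E = D := by
    have := (WittVector.frobeniusEquiv p k).apply_symm_apply D
    rwa [WittVector.frobeniusEquiv_apply] at this
  have hout : c.out = E * p := by
    rw [← WittVector.verschiebung_frobenius, hE, hVD]
  refine ⟨WittVector.truncate (n + 1) E, ?_⟩
  rw [← truncate_out p (n + 1) c, hout, map_mul, map_natCast, mul_comm]

theorem p_pow_zero : (p : TruncatedWittVector p (n + 1) k) ^ (n + 1) = 0 := by
  have : (p : TruncatedWittVector p (n + 1) k) ^ (n + 1)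
      = WittVector.truncate (n + 1) ((p : WittVector p k) ^ (n + 1)) := by
    rw [map_pow, map_natCast]
  rw [this]
  ext i
  rw [WittVector.coeff_truncate, WittVector.coeff_p_pow_eq_zero p k (Nat.ne_of_lt i.isLt)]
  simp

theorem coeff_zero_of_p_mul {j : ℕ} (hj : j ≤ n) (a b : TruncatedWittVector p (n + 1) k)
    (h : (p : TruncatedWittVector p (n + 1) k) ^ j * a
      = (p : TruncatedWittVector p (n + 1) k) ^ (j + 1) * b) : a.coeff 0 = 0 := by
  have h' : WittVector.truncate (n + 1) ((p : WittVector p k) ^ j * a.out)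
      = WittVector.truncate (n + 1) ((p : WittVector p k) ^ (j + 1) * b.out) := by
    rw [map_mul, map_mul, map_pow, map_pow, map_natCast, truncate_out, truncate_out, h]
  have h2 := congrArg (fun z : TruncatedWittVector p (n + 1) k =>
    z.coeff ⟨j, by omega⟩) h'
  simp only [WittVector.coeff_truncate] at h2
  rw [p_pow_mul, p_pow_mul] at h2
  have hL : (WittVector.verschiebung^[j] (WittVector.frobenius^[j] a.out)).coeff j
      = (a.coeff 0) ^ p ^ j := by
    have h3 := WittVector.iterate_verschiebung_coeff (WittVector.frobenius^[j] a.out) j 0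
    rw [zero_add] at h3
    rw [h3, WittVector.iterate_frobenius_coeff]
    congr 1
  have hR : (WittVector.verschiebung^[j + 1] (WittVector.frobenius^[j + 1] b.out)).coeff j = 0 :=
    iterate_verschiebung_coeff_lt p _ (Nat.lt_succ_self j)
  rw [hL, hR] at h2
  exact pow_eq_zero_iff (pow_ne_zero _ (Nat.Prime.ne_zero Fact.out)) |>.mp h2

variable (d : ℕ) (res : TruncatedWittVector p (n + 1) k →+* k)
  (hres : ∀ c : TruncatedWittVector p (n + 1) k, res c = c.coeff 0)

include hres in
theorem res_surjective : Surjective res := by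
  intro a
  refine ⟨TruncatedWittVector.mk p (fun j => if j = 0 then a else 0), ?_⟩
  rw [hres, TruncatedWittVector.coeff_mk, if_pos rfl]

include hres in
theorem poly_hker (a : MvPolynomial (Fin d) (TruncatedWittVector p (n + 1) k))
    (h : MvPolynomial.map res a = 0) :
    (p : MvPolynomial (Fin d) (TruncatedWittVector p (n + 1) k)) ∣ a := by
  have hc : ∀ m, ∃ cm, MvPolynomial.coeff m a = (p : TruncatedWittVector p (n + 1) k) * cm := by
    intro m
    have h1 : res (MvPolynomial.coeff m a) = 0 := by
      rw [← MvPolynomial.coeff_map, h, MvPolynomial.coeff_zero]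
    rw [hres] at h1
    exact dvd_of_coeff_zero p k n _ h1
  choose cm hcm using hc
  refine ⟨∑ m ∈ a.support, MvPolynomial.monomial m (cm m), ?_⟩
  conv_lhs => rw [MvPolynomial.as_sum a]
  rw [Finset.mul_sum]
  refine Finset.sum_congr rfl fun m _ => ?_
  rw [hcm m, ← MvPolynomial.C_mul_monomial, map_natCast]

theorem poly_p_pow_zero :
    (p : MvPolynomial (Fin d) (TruncatedWittVector p (n + 1) k)) ^ (n + 1) = 0 := by
  have : (p : MvPolynomial (Fin d) (TruncatedWittVector p (n + 1) k))
      = MvPolynomial.C (p : TruncatedWittVector p (n + 1) k) := (map_natCast MvPolynomial.C p).symm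
  rw [this, ← map_pow, p_pow_zero, map_zero]

end field

theorem ghost_zero_eq {R : Type*} [CommRing R] (y : WittVector p R) :
    WittVector.ghostComponent 0 y = y.coeff 0 := by
  rw [ghost_eq_sum]; simp

theorem decomp {R : Type*} [CommRing R] (m : ℕ) (x : WittVector p R) :
    ∃ b : ℕ → R, WittVector.truncate m x = WittVector.truncate m
      (∑ i ∈ Finset.range m, WittVector.verschiebung^[i] (WittVector.teichmuller p (b i))) := by
  induction m generalizing x with
  | zero => exact ⟨fun _ => 0, by ext i; exact i.elim0⟩
  | succ m ih =>
    set x0 := x.coeff 0 with hx0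
    have hz : (x - WittVector.teichmuller p x0).coeff 0 = 0 := by
      rw [← ghost_zero_eq, map_sub, ghost_zero_eq, ghost_zero_eq,
        WittVector.teichmuller_coeff_zero, sub_self]
    set w := WittVector.mk p (fun i => (x - WittVector.teichmuller p x0).coeff (i + 1)) with hw
    have hVw : WittVector.verschiebung w = x - WittVector.teichmuller p x0 := by
      apply WittVector.ext fun i => ?_
      cases i with
      | zero => rw [WittVector.verschiebung_coeff_zero, hz]
      | succ i => rw [WittVector.verschiebung_coeff_succ, hw, WittVector.coeff_mk]
    have hx : x = WittVector.teichmuller p x0 + WittVector.verschiebung w := by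
      rw [hVw]; ring
    obtain ⟨b', hb'⟩ := ih w
    set S' := ∑ i ∈ Finset.range m, WittVector.verschiebung^[i] (WittVector.teichmuller p (b' i))
      with hS'
    refine ⟨fun i => Nat.casesOn i x0 b', ?_⟩
    have hsum : ∑ i ∈ Finset.range (m + 1), WittVector.verschiebung^[i]
          (WittVector.teichmuller p ((fun i => Nat.casesOn i x0 b' : ℕ → R) i))
        = WittVector.teichmuller p x0 + WittVector.verschiebung S' := by
      rw [Finset.sum_range_succ']
      simp only [Function.iterate_succ_apply']
      rw [← map_sum WittVector.verschiebung]
      rw [add_comm]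
      rfl
    rw [hsum, hx, map_add, map_add]
    congr 1
    ext i
    rw [WittVector.coeff_truncate, WittVector.coeff_truncate]
    obtain ⟨i, hi⟩ := i
    cases i with
    | zero => rw [WittVector.verschiebung_coeff_zero, WittVector.verschiebung_coeff_zero]
    | succ j =>
      show (WittVector.verschiebung w).coeff (j + 1) = (WittVector.verschiebung S').coeff (j + 1)
      rw [WittVector.verschiebung_coeff_succ, WittVector.verschiebung_coeff_succ]
      have h5 := congrArg (fun z : TruncatedWittVector p m R =>
        z.coeff ⟨j, by omega⟩) hb'
      simpa [WittVector.coeff_truncate] using h5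

theorem frobenius_iterate_teichmuller {R : Type*} [CommRing R] [CharP R p] (i : ℕ) (a : R) :
    WittVector.frobenius^[i] (WittVector.teichmuller p a)
      = WittVector.teichmuller p (a ^ p ^ i) := by
  induction i with
  | zero => simp
  | succ i ih =>
    rw [Function.iterate_succ_apply', ih, WittVector.frobenius_eq_map_frobenius,
      WittVector.map_teichmuller]
    congr 1
    rw [frobenius_def, ← pow_mul, pow_succ]

theorem coeff_truncVT {R : Type*} [CommRing R] (m i : ℕ) (a : R) (j : Fin m) :
    (WittVector.truncate m (WittVector.verschiebung^[i]
      (WittVector.teichmuller p a))).coeff j = if (j : ℕ) = i then a else 0 := by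
  rw [WittVector.coeff_truncate]
  rcases lt_trichotomy (j : ℕ) i with h | h | h
  · rw [iterate_verschiebung_coeff_lt p _ h, if_neg (by omega)]
  · have h4 := WittVector.iterate_verschiebung_coeff (WittVector.teichmuller p a) i 0
    rw [zero_add] at h4
    rw [h, h4, WittVector.teichmuller_coeff_zero, if_pos rfl]
  · obtain ⟨l, hl⟩ : ∃ l, (j : ℕ) = l + 1 + i := ⟨(j : ℕ) - i - 1, by omega⟩
    rw [hl, WittVector.iterate_verschiebung_coeff,
      WittVector.teichmuller_coeff_pos p a (l + 1) (Nat.succ_pos l), if_neg (by omega)]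

section field2

variable (k : Type*) [Field k] [CharP k p] [PerfectRing k p] (n : ℕ)
  (res : TruncatedWittVector p (n + 1) k →+* k)
  (hres : ∀ c : TruncatedWittVector p (n + 1) k, res c = c.coeff 0)
  (hρ : Surjective res)
  (hker : ∀ a, res a = 0 → (p : TruncatedWittVector p (n + 1) k) ∣ a)
  (hp0 : ((p : TruncatedWittVector p (n + 1) k)) ^ (n + 1) = 0)

include hres in
theorem wtGen_res_eq (c : TruncatedWittVector p (n + 1) k) :
    wtGen p n res hρ hker hp0 c = twMap p (n + 1) (iterateFrobenius k p n) c := by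
  obtain ⟨b, hb⟩ := decomp p (n + 1) c.out
  have hc : c = ∑ i ∈ Finset.range (n + 1), WittVector.truncate (n + 1)
      (WittVector.verschiebung^[i] (WittVector.teichmuller p (b i))) := by
    rw [← map_sum, ← hb, truncate_out]
  rw [hc, map_sum, map_sum]
  refine Finset.sum_congr rfl fun i hi => ?_
  rw [Finset.mem_range] at hi
  set e := WittVector.truncate (n + 1)
    (WittVector.verschiebung^[i] (WittVector.teichmuller p (b i))) with he
  have hL : wtGen p n res hρ hker hp0 e
      = (p : TruncatedWittVector p (n + 1) k) ^ i
        * (WittVector.truncate (n + 1) (WittVector.teichmuller p (b i))) ^ p ^ (n - i) := by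
    rw [wtGen_spec p n res hρ hker hp0 e
      (fun j => if (j : ℕ) = i then WittVector.truncate (n + 1)
        (WittVector.teichmuller p (b i)) else 0)
      (fun j => ?_)]
    · rw [Finset.sum_eq_single (⟨i, by omega⟩ : Fin (n + 1))]
      · rw [if_pos rfl]
      · intro j _ hj
        rw [if_neg (by simpa [Fin.ext_iff] using hj),
          zero_pow (pow_ne_zero _ (Nat.Prime.ne_zero Fact.out)), mul_zero]
      · intro hmem; exact absurd (Finset.mem_univ _) hmem
    · rw [he, coeff_truncVT]
      by_cases hji : (j : ℕ) = i
      · rw [if_pos hji, if_pos hji, hres]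
        have h0 := WittVector.coeff_truncate (p := p) (WittVector.teichmuller p (b i))
          (0 : Fin (n + 1))
        rw [h0]
        exact WittVector.teichmuller_coeff_zero _ _
      · rw [if_neg hji, if_neg hji, map_zero]
  have hL2 : (p : TruncatedWittVector p (n + 1) k) ^ i
        * (WittVector.truncate (n + 1) (WittVector.teichmuller p (b i))) ^ p ^ (n - i)
      = WittVector.truncate (n + 1) (WittVector.verschiebung^[i]
          (WittVector.teichmuller p (b i ^ p ^ n))) := by
    rw [← map_pow, ← map_natCast (WittVector.truncate (n + 1)) p, ← map_pow, ← map_mul]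
    congr 1
    have ht : (WittVector.teichmuller p (b i)) ^ p ^ (n - i)
        = WittVector.teichmuller p (b i ^ p ^ (n - i)) :=
      ((WittVector.teichmuller p).map_pow (b i) (p ^ (n - i))).symm
    have hexp : (b i ^ p ^ (n - i)) ^ p ^ i = b i ^ p ^ n := by
      rw [← pow_mul, ← pow_add, Nat.sub_add_cancel (by omega : i ≤ n)]
    rw [ht, p_pow_mul, frobenius_iterate_teichmuller, hexp]
  have hR : twMap p (n + 1) (iterateFrobenius k p n) e
      = WittVector.truncate (n + 1) (WittVector.verschiebung^[i]
          (WittVector.teichmuller p (b i ^ p ^ n))) := by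
    ext j
    rw [twMap_coeff, he, coeff_truncVT, coeff_truncVT]
    split
    · rw [iterateFrobenius_def]
    · rw [map_zero]
  rw [hL, hL2, hR]

end field2

end Aux


/-- Let `k` be a perfect field of characteristic `p`, `d ≥ 1`, `n ≥ 0`,
`A = k[t₁,…,t_d]`, `A_{n+1} = W_{n+1}(k)[t₁,…,t_d]` and `π : A_{n+1} → A` the coefficientwise
reduction along the residue map `res : W_{n+1}(k) → k` (characterized by `res c = c.coeff 0`).
Then:
(1) there is a unique map `w̃_n : W_{n+1}(A) → A_{n+1}` with
    `w̃_n ∘ W_{n+1}(π) = w_n` (the `n`-th ghost map); explicitly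
    `w̃_n (f₁,…,f_{n+1}) = ∑ pⁱ f̃_{i+1}^{p^{n-i}}` for arbitrary lifts `f̃_j` along `π`;
(2) `w̃_n` is a ring homomorphism, semilinear over the `n`-th iterate of the Witt vector
    Frobenius of `W_{n+1}(k)`;
(3) `F ∘ w̃_n = F̃^{n+1}` for every Frobenius lift `F` of `A_{n+1}`, independently of `F`;
(4) `w̃_n` is injective and maps the image of `Vⁱ : W_{n+1-i}(A) → W_{n+1}(A)` bijectively
    onto `w̃_n(W_{n+1}(A)) ∩ pⁱ A_{n+1}` for every `0 ≤ i ≤ n`. -/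
theorem tilde_wn_exists (p : ℕ) [Fact p.Prime]
    (k : Type*) [Field k] [CharP k p] [PerfectRing k p]
    (d n : ℕ) (hd : 1 ≤ d)
    (res : TruncatedWittVector p (n + 1) k →+* k)
    (hres : ∀ c : TruncatedWittVector p (n + 1) k, res c = c.coeff 0) :
    ∃ wt : TruncatedWittVector p (n + 1) (MvPolynomial (Fin d) k) →+*
        MvPolynomial (Fin d) (TruncatedWittVector p (n + 1) k),
      -- (1) `w̃_n` factors the `n`-th ghost map through `W_{n+1}(π)` …
      (∀ y : TruncatedWittVector p (n + 1)
          (MvPolynomial (Fin d) (TruncatedWittVector p (n + 1) k)),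
        wt (twMap p (n + 1) (MvPolynomial.map res) y) =
          ∑ i : Fin (n + 1), (p : MvPolynomial (Fin d) (TruncatedWittVector p (n + 1) k)) ^ (i : ℕ)
            * y.coeff i ^ p ^ (n - (i : ℕ))) ∧
      -- … and is the unique map (of sets) doing so
      (∀ g : TruncatedWittVector p (n + 1) (MvPolynomial (Fin d) k) →
          MvPolynomial (Fin d) (TruncatedWittVector p (n + 1) k),
        (∀ y, g (twMap p (n + 1) (MvPolynomial.map res) y) =
          ∑ i : Fin (n + 1), (p : MvPolynomial (Fin d) (TruncatedWittVector p (n + 1) k)) ^ (i : ℕ)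
            * y.coeff i ^ p ^ (n - (i : ℕ))) → g = ⇑wt) ∧
      -- explicitly, `w̃_n` is given by the displayed formula on arbitrary coefficient lifts
      (∀ (x : TruncatedWittVector p (n + 1) (MvPolynomial (Fin d) k))
          (g : Fin (n + 1) → MvPolynomial (Fin d) (TruncatedWittVector p (n + 1) k)),
        (∀ i, MvPolynomial.map res (g i) = x.coeff i) →
        wt x = ∑ i : Fin (n + 1),
          (p : MvPolynomial (Fin d) (TruncatedWittVector p (n + 1) k)) ^ (i : ℕ)
            * g i ^ p ^ (n - (i : ℕ))) ∧
      -- (2) `w̃_n` is `Φⁿ`-semilinear over `W_{n+1}(k)`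
      (∀ (c : TruncatedWittVector p (n + 1) k)
          (x : TruncatedWittVector p (n + 1) (MvPolynomial (Fin d) k)),
        wt (twMap p (n + 1) (MvPolynomial.C (σ := Fin d) (R := k)) c * x) =
          MvPolynomial.C (twMap p (n + 1) (iterateFrobenius k p n) c) * wt x) ∧
      -- (3) for every Frobenius lift `F` on `A_{n+1}`, `F ∘ w̃_n = F̃^{n+1}`
      (∀ F : MvPolynomial (Fin d) (TruncatedWittVector p (n + 1) k) →+*
          MvPolynomial (Fin d) (TruncatedWittVector p (n + 1) k),
        (∀ g, MvPolynomial.map res (F g) = MvPolynomial.map res g ^ p) →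
        ∀ (x : TruncatedWittVector p (n + 1) (MvPolynomial (Fin d) k))
          (g : Fin (n + 1) → MvPolynomial (Fin d) (TruncatedWittVector p (n + 1) k)),
          (∀ i, MvPolynomial.map res (g i) = x.coeff i) →
          F (wt x) = ∑ i : Fin (n + 1),
            (p : MvPolynomial (Fin d) (TruncatedWittVector p (n + 1) k)) ^ (i : ℕ)
              * g i ^ p ^ (n + 1 - (i : ℕ))) ∧
      -- (4) injectivity …
      Function.Injective wt ∧
      -- … and `w̃_n` maps the image of `Vⁱ` bijectively onto `w̃_n(W_{n+1}(A)) ∩ pⁱ A_{n+1}`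
      (∀ i ≤ n,
        ⇑wt '' {x | ∃ z : TruncatedWittVector p (n + 1 - i) (MvPolynomial (Fin d) k),
            vIter p (n + 1) i z = x} =
          Set.range ⇑wt ∩ {y | ∃ u, y =
            (p : MvPolynomial (Fin d) (TruncatedWittVector p (n + 1) k)) ^ i * u}) := by
  classical
  have hρs : Function.Surjective res := Aux.res_surjective p k n res hres
  have hπsurj : Function.Surjective
      (MvPolynomial.map (σ := Fin d) res) := MvPolynomial.map_surjective res hρs
  have hkerπ := Aux.poly_hker p k n d res hres
  have hp0π := Aux.poly_p_pow_zero p k n d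
  have hkerres : ∀ a, res a = 0 → (p : TruncatedWittVector p (n + 1) k) ∣ a := fun a ha =>
    Aux.dvd_of_coeff_zero p k n a (by rw [← hres a]; exact ha)
  have hp0res := Aux.p_pow_zero p k n
  set π : MvPolynomial (Fin d) (TruncatedWittVector p (n + 1) k) →+* MvPolynomial (Fin d) k :=
    MvPolynomial.map (σ := Fin d) res with hπdef
  have hspec := Aux.wtGen_spec p n π hπsurj hkerπ hp0π
  -- the key vanishing lemma
  have hK : ∀ (x : TruncatedWittVector p (n + 1) (MvPolynomial (Fin d) k)) (j : ℕ)
      (hj : j < n + 1),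
      ((p : MvPolynomial (Fin d) (TruncatedWittVector p (n + 1) k)) ^ (j + 1)
        ∣ Aux.wtGen p n π hπsurj hkerπ hp0π x) →
      (∀ m : Fin (n + 1), (m : ℕ) < j → x.coeff m = 0) → x.coeff ⟨j, hj⟩ = 0 := by
    intro x j hj hdvd hvan
    set g : Fin (n + 1) → MvPolynomial (Fin d) (TruncatedWittVector p (n + 1) k) :=
      fun m => if (m : ℕ) < j then 0 else Function.surjInv hπsurj (x.coeff m) with hgdef
    have hg : ∀ m, π (g m) = x.coeff m := by
      intro m
      by_cases h : (m : ℕ) < j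
      · rw [hgdef]; dsimp only; rw [if_pos h, map_zero, hvan m h]
      · rw [hgdef]; dsimp only; rw [if_neg h]; exact Function.surjInv_eq hπsurj _
    have hwx := hspec x g hg
    have hsplit := Finset.add_sum_erase Finset.univ
      (fun m : Fin (n + 1) => (p : MvPolynomial (Fin d) (TruncatedWittVector p (n + 1) k)) ^ (m : ℕ)
        * g m ^ p ^ (n - (m : ℕ))) (Finset.mem_univ (⟨j, hj⟩ : Fin (n + 1)))
    have hdvd2 : (p : MvPolynomial (Fin d) (TruncatedWittVector p (n + 1) k)) ^ (j + 1) ∣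
        ∑ m ∈ Finset.univ.erase (⟨j, hj⟩ : Fin (n + 1)),
          (p : MvPolynomial (Fin d) (TruncatedWittVector p (n + 1) k)) ^ (m : ℕ)
            * g m ^ p ^ (n - (m : ℕ)) := by
      refine Finset.dvd_sum fun m hm => ?_
      rcases lt_or_ge (m : ℕ) j with h | h
      · rw [hgdef]; dsimp only
        rw [if_pos h, zero_pow (pow_ne_zero _ (Nat.Prime.ne_zero Fact.out)), mul_zero]
        exact dvd_zero _
      · have hne : (m : ℕ) ≠ j := by
          simpa [Fin.ext_iff] using (Finset.mem_erase.mp hm).1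
        exact Dvd.dvd.mul_right (pow_dvd_pow _ (by omega)) _
    have hq : (p : MvPolynomial (Fin d) (TruncatedWittVector p (n + 1) k)) ^ (j + 1) ∣
        (p : MvPolynomial (Fin d) (TruncatedWittVector p (n + 1) k)) ^ j
          * g ⟨j, hj⟩ ^ p ^ (n - j) := by
      have h1 : (p : MvPolynomial (Fin d) (TruncatedWittVector p (n + 1) k)) ^ j
            * g ⟨j, hj⟩ ^ p ^ (n - j)
          = Aux.wtGen p n π hπsurj hkerπ hp0π x -
            ∑ m ∈ Finset.univ.erase (⟨j, hj⟩ : Fin (n + 1)),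
              (p : MvPolynomial (Fin d) (TruncatedWittVector p (n + 1) k)) ^ (m : ℕ)
                * g m ^ p ^ (n - (m : ℕ)) := by
        rw [hwx, ← hsplit]
        ring
      rw [h1]
      exact dvd_sub hdvd hdvd2
    obtain ⟨v, hv⟩ := hq
    have hqc : ∀ m₀ : Fin d →₀ ℕ,
        (p : TruncatedWittVector p (n + 1) k) ^ j
          * MvPolynomial.coeff m₀ (g ⟨j, hj⟩ ^ p ^ (n - j))
        = (p : TruncatedWittVector p (n + 1) k) ^ (j + 1) * MvPolynomial.coeff m₀ v := by
      intro m₀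
      have h2 := congrArg (MvPolynomial.coeff m₀) hv
      rw [show ((p : MvPolynomial (Fin d) (TruncatedWittVector p (n + 1) k)) ^ j)
            = MvPolynomial.C ((p : TruncatedWittVector p (n + 1) k) ^ j) by
          rw [map_pow, map_natCast],
        show ((p : MvPolynomial (Fin d) (TruncatedWittVector p (n + 1) k)) ^ (j + 1))
            = MvPolynomial.C ((p : TruncatedWittVector p (n + 1) k) ^ (j + 1)) by
          rw [map_pow, map_natCast],
        MvPolynomial.coeff_C_mul, MvPolynomial.coeff_C_mul] at h2
      exact h2
    have hπq : π (g ⟨j, hj⟩) ^ p ^ (n - j) = 0 := by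
      rw [← map_pow]
      apply MvPolynomial.ext
      intro m₀
      rw [MvPolynomial.coeff_map, MvPolynomial.coeff_zero, hres]
      exact Aux.coeff_zero_of_p_mul p k n (by omega) _ _ (hqc m₀)
    have hgj0 : π (g ⟨j, hj⟩) = 0 :=
      pow_eq_zero_iff (pow_ne_zero _ (Nat.Prime.ne_zero Fact.out)) |>.mp hπq
    rw [← hg ⟨j, hj⟩]
    exact hgj0
  have hVan : ∀ (x : TruncatedWittVector p (n + 1) (MvPolynomial (Fin d) k)) (i : ℕ),
      ((p : MvPolynomial (Fin d) (TruncatedWittVector p (n + 1) k)) ^ i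
        ∣ Aux.wtGen p n π hπsurj hkerπ hp0π x) →
      ∀ m : Fin (n + 1), (m : ℕ) < i → x.coeff m = 0 := by
    intro x i hdvd m hm
    suffices h : ∀ j : ℕ, j < i → ∀ (hj : j < n + 1), x.coeff ⟨j, hj⟩ = 0 by
      simpa using h m hm m.isLt
    intro j
    induction j using Nat.strong_induction_on with
    | _ j ih =>
      intro hji hj
      refine hK x j hj (dvd_trans (pow_dvd_pow _ (by omega)) hdvd) fun m' hm' => ?_
      simpa using ih m' hm' (by omega) m'.isLt
  have hJ : ∀ (x : TruncatedWittVector p (n + 1) (MvPolynomial (Fin d) k)) (i : ℕ),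
      (∀ m : Fin (n + 1), (m : ℕ) < i → x.coeff m = 0) →
      (p : MvPolynomial (Fin d) (TruncatedWittVector p (n + 1) k)) ^ i
        ∣ Aux.wtGen p n π hπsurj hkerπ hp0π x := by
    intro x i hvan
    set g : Fin (n + 1) → MvPolynomial (Fin d) (TruncatedWittVector p (n + 1) k) :=
      fun m => if (m : ℕ) < i then 0 else Function.surjInv hπsurj (x.coeff m) with hgdef
    have hg : ∀ m, π (g m) = x.coeff m := by
      intro m
      by_cases h : (m : ℕ) < i
      · rw [hgdef]; dsimp only; rw [if_pos h, map_zero, hvan m h]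
      · rw [hgdef]; dsimp only; rw [if_neg h]; exact Function.surjInv_eq hπsurj _
    rw [hspec x g hg]
    refine Finset.dvd_sum fun m _ => ?_
    rcases lt_or_ge (m : ℕ) i with h | h
    · rw [hgdef]; dsimp only
      rw [if_pos h, zero_pow (pow_ne_zero _ (Nat.Prime.ne_zero Fact.out)), mul_zero]
      exact dvd_zero _
    · exact Dvd.dvd.mul_right (pow_dvd_pow _ h) _
  refine ⟨Aux.wtGen p n π hπsurj hkerπ hp0π, ?_, ?_, ?_, ?_, ?_, ?_, ?_⟩
  · -- (1a)
    intro y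
    exact hspec _ (fun i => y.coeff i) (fun i => (Aux.twMap_coeff p (n + 1) π y i).symm)
  · -- (1b) uniqueness
    intro g hg
    funext x
    obtain ⟨y, rfl⟩ := Aux.twMap_surjective p (n + 1) π hπsurj x
    rw [hg y]
    exact (hspec _ (fun i => y.coeff i) (fun i => (Aux.twMap_coeff p (n + 1) π y i).symm)).symm
  · -- (1c) explicit formula
    intro x g hg
    exact hspec x g hg
  · -- (2) semilinearity
    intro c x
    obtain ⟨c', hc'⟩ := Aux.twMap_surjective p (n + 1) res hρs c
    obtain ⟨Y, hY⟩ := Aux.twMap_surjective p (n + 1) π hπsurj x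
    have hcomm : twMap p (n + 1) π (twMap p (n + 1)
        (MvPolynomial.C : TruncatedWittVector p (n + 1) k →+*
          MvPolynomial (Fin d) (TruncatedWittVector p (n + 1) k)) c')
        = twMap p (n + 1) (MvPolynomial.C (σ := Fin d) (R := k)) c := by
      refine TruncatedWittVector.ext fun j => ?_
      rw [Aux.twMap_coeff, Aux.twMap_coeff, Aux.twMap_coeff, ← hc', Aux.twMap_coeff]
      exact MvPolynomial.map_C res _
    have hfac : Aux.wtGen p n π hπsurj hkerπ hp0π (twMap p (n + 1) π (twMap p (n + 1)
        (MvPolynomial.C : TruncatedWittVector p (n + 1) k →+*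
          MvPolynomial (Fin d) (TruncatedWittVector p (n + 1) k)) c'))
        = MvPolynomial.C (twMap p (n + 1) (iterateFrobenius k p n) c) := by
      rw [hspec _ (fun i => MvPolynomial.C (c'.coeff i))
        (fun i => by rw [Aux.twMap_coeff, Aux.twMap_coeff])]
      have hC : ∑ i : Fin (n + 1),
            (p : MvPolynomial (Fin d) (TruncatedWittVector p (n + 1) k)) ^ (i : ℕ)
              * (MvPolynomial.C (c'.coeff i)) ^ p ^ (n - (i : ℕ))
          = MvPolynomial.C (∑ i : Fin (n + 1), (p : TruncatedWittVector p (n + 1) k) ^ (i : ℕ)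
              * (c'.coeff i) ^ p ^ (n - (i : ℕ))) := by
        rw [map_sum]
        exact Finset.sum_congr rfl fun i _ => by rw [map_mul, map_pow, map_pow, map_natCast]
      rw [hC]
      congr 1
      rw [← Aux.wtGen_spec p n res hρs hkerres hp0res (twMap p (n + 1) res c')
        (fun i => c'.coeff i) (fun i => (Aux.twMap_coeff p (n + 1) res c' i).symm), hc',
        Aux.wtGen_res_eq p k n res hres hρs hkerres hp0res c]
    rw [← hY, ← hcomm, map_mul (Aux.wtGen p n π hπsurj hkerπ hp0π), hfac]
  · -- (3) Frobenius lifts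
    intro F hF x g hg
    rw [hspec x g hg, map_sum]
    have h1 : ∀ m : Fin (n + 1),
        F ((p : MvPolynomial (Fin d) (TruncatedWittVector p (n + 1) k)) ^ (m : ℕ)
            * g m ^ p ^ (n - (m : ℕ)))
        = (p : MvPolynomial (Fin d) (TruncatedWittVector p (n + 1) k)) ^ (m : ℕ)
            * (F (g m)) ^ p ^ (n - (m : ℕ)) := by
      intro m; rw [map_mul, map_pow, map_pow, map_natCast]
    rw [Finset.sum_congr rfl (fun m _ => h1 m)]
    rw [Aux.sum_congr_mod p n hp0π (fun m => F (g m)) (fun m => g m ^ p) (fun m => by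
      apply hkerπ
      rw [map_sub, hF (g m), map_pow, sub_self])]
    refine Finset.sum_congr rfl fun m _ => ?_
    have hm := m.isLt
    have h2 : (g m ^ p) ^ p ^ (n - (m : ℕ)) = g m ^ p ^ (n + 1 - (m : ℕ)) := by
      rw [← pow_mul, ← pow_succ']
      congr 2
      omega
    rw [h2]
  · -- injectivity
    rw [injective_iff_map_eq_zero]
    intro x hx
    refine TruncatedWittVector.ext fun m => ?_
    have h0 : (0 : TruncatedWittVector p (n + 1) (MvPolynomial (Fin d) k)).coeff m = 0 := by
      rw [← map_zero (WittVector.truncate (p := p) (n + 1)), WittVector.coeff_truncate,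
        WittVector.zero_coeff]
    rw [h0]
    exact hVan x (n + 1) (by rw [hx]; exact dvd_zero _) m m.isLt
  · -- (4)
    intro i hi
    ext y
    simp only [Set.mem_image, Set.mem_inter_iff, Set.mem_range, Set.mem_setOf_eq]
    constructor
    · rintro ⟨x, ⟨z, hz⟩, rfl⟩
      have hvan : ∀ m : Fin (n + 1), (m : ℕ) < i → x.coeff m = 0 := by
        intro m hm
        rw [← hz]
        show (WittVector.truncate (n + 1) ((fun y : WittVector p (MvPolynomial (Fin d) k) =>
          WittVector.verschiebung y)^[i] z.out)).coeff m = 0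
        rw [WittVector.coeff_truncate]
        exact Aux.iterate_verschiebung_coeff_lt p _ hm
      obtain ⟨u, hu⟩ := hJ x i hvan
      exact ⟨⟨x, rfl⟩, u, hu⟩
    · rintro ⟨⟨x, rfl⟩, u, hu⟩
      have hvan := hVan x i ⟨u, hu⟩
      refine ⟨x, ⟨TruncatedWittVector.mk p
        (fun m : Fin (n + 1 - i) => x.coeff ⟨(m : ℕ) + i, by have := m.isLt; omega⟩), ?_⟩, rfl⟩
      set z : TruncatedWittVector p (n + 1 - i) (MvPolynomial (Fin d) k) :=
        TruncatedWittVector.mk p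
          (fun m : Fin (n + 1 - i) => x.coeff ⟨(m : ℕ) + i, by have := m.isLt; omega⟩) with hzdef
      refine TruncatedWittVector.ext fun j => ?_
      obtain ⟨j, hj⟩ := j
      show (WittVector.truncate (n + 1) ((fun y : WittVector p (MvPolynomial (Fin d) k) =>
        WittVector.verschiebung y)^[i] z.out)).coeff ⟨j, hj⟩ = x.coeff ⟨j, hj⟩
      rw [WittVector.coeff_truncate]
      rcases lt_or_ge j i with h | h
      · exact (Aux.iterate_verschiebung_coeff_lt p _ h).trans (hvan ⟨j, hj⟩ h).symm
      · have h3 := WittVector.iterate_verschiebung_coeff z.out i (j - i)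
        have h4 : z.out.coeff (j - i) = x.coeff ⟨j, hj⟩ := by
          have h5 := TruncatedWittVector.coeff_out z (⟨j - i, by omega⟩ : Fin (n + 1 - i))
          rw [h5, hzdef, TruncatedWittVector.coeff_mk]
          congr 1
          simp only [Fin.mk.injEq]
          omega
        calc ((fun y : WittVector p (MvPolynomial (Fin d) k) =>
              WittVector.verschiebung y)^[i] z.out).coeff j
            = (WittVector.verschiebung^[i] z.out).coeff (j - i + i) := by
              rw [Nat.sub_add_cancel h]
          _ = z.out.coeff (j - i) := h3
          _ = x.coeff ⟨j, hj⟩ := h4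
end

section
/- Let p be a prime, n ≥ 0, and B a perfect commutative ring of characteristic p. Set C := B[t] and C_{n+1} := W_{n+1}(B)[t], with ρ : C_{n+1} → C the reduction applying the residue map W_{n+1}(B) → B to each coefficient, and let w̃_n : W_{n+1}(C) → C_{n+1} be the injective ring homomorphism (f₁,…,f_{n+1}) ↦ Σ_{i=0}^n pⁱ·f̃_{i+1}^{p^{n−i}}, where f̃_j ∈ C_{n+1} is any lift of f_j along ρ. Let ∂^{[r]} denote the r-th Hasse derivative on C_{n+1} with respect to t. Then ∂^{[r]} preserves the image of w̃_n: for every f ∈ W_{n+1}(C) there exists a (necessarily unique) g ∈ W_{n+1}(C) with ∂^{[r]}(w̃_n(f)) = w̃_n(g); equivalently, there is a unique map D^{[r]} : W_{n+1}(C) → W_{n+1}(C) with w̃_n ∘ D^{[r]} = ∂^{[r]} ∘ w̃_n, and D^{[r]} is a W_{n+1}(B)-linear differential operator of order ≤ r. -/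
/-- The commutator `[θ, a] = θ ∘ (a·) − (a·) ∘ θ` of an operator `θ : R → R` with the
multiplication operator by `a ∈ R`. -/
def mulCommutator {R : Type*} [CommRing R] (a : R) (θ : R → R) : R → R :=
  fun x => θ (a * x) - a * θ x

/-- `IsDiffOpOfOrderLE q θ` says that `θ` is a differential operator of order `≤ q` in the
Grothendieck sense: all `(q+1)`-fold iterated commutators of `θ` with multiplication
operators vanish. -/
def IsDiffOpOfOrderLE {R : Type*} [CommRing R] : ℕ → (R → R) → Prop
  | 0, θ => ∀ a : R, mulCommutator a θ = 0
  | q + 1, θ => ∀ a : R, IsDiffOpOfOrderLE q (mulCommutator a θ)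

/-! ### Generalities on differential operators in the commutator sense -/

section DiffOp

variable {R : Type*} [CommRing R]

theorem whd_mulCommutator_apply (a : R) (θ : R → R) (x : R) :
    mulCommutator a θ x = θ (a * x) - a * θ x := rfl

theorem whd_isDiffOp_congr {q : ℕ} {θ η : R → R} (h : ∀ x, θ x = η x)
    (hθ : IsDiffOpOfOrderLE q θ) : IsDiffOpOfOrderLE q η := by
  have : θ = η := funext h
  rwa [← this]

theorem whd_isDiffOp_zero (q : ℕ) : IsDiffOpOfOrderLE q (fun _ : R => (0 : R)) := by
  induction q with
  | zero =>
    intro a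
    funext x
    show (0 : R) - a * 0 = 0
    ring
  | succ q ih =>
    intro a
    refine whd_isDiffOp_congr (fun x => ?_) ih
    show (0 : R) = mulCommutator a (fun _ : R => (0 : R)) x
    show (0 : R) = (0 : R) - a * 0
    ring

theorem whd_isDiffOp_add : ∀ {q : ℕ} {θ η : R → R}, IsDiffOpOfOrderLE q θ →
    IsDiffOpOfOrderLE q η → IsDiffOpOfOrderLE q (fun x => θ x + η x) := by
  intro q
  induction q with
  | zero =>
    intro θ η hθ hη a
    funext x
    have h1 : θ (a * x) - a * θ x = 0 := congrFun (hθ a) x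
    have h2 : η (a * x) - a * η x = 0 := congrFun (hη a) x
    show (θ (a * x) + η (a * x)) - a * (θ x + η x) = 0
    linear_combination h1 + h2
  | succ q ih =>
    intro θ η hθ hη a
    refine whd_isDiffOp_congr (fun x => ?_) (ih (hθ a) (hη a))
    show (mulCommutator a θ x + mulCommutator a η x) = mulCommutator a (fun x => θ x + η x) x
    show (θ (a * x) - a * θ x) + (η (a * x) - a * η x)
      = (θ (a * x) + η (a * x)) - a * (θ x + η x)
    ring

theorem whd_isDiffOp_mul_left : ∀ {q : ℕ} (c : R) {θ : R → R}, IsDiffOpOfOrderLE q θ →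
    IsDiffOpOfOrderLE q (fun x => c * θ x) := by
  intro q
  induction q with
  | zero =>
    intro c θ hθ a
    funext x
    have h1 : θ (a * x) - a * θ x = 0 := congrFun (hθ a) x
    show c * θ (a * x) - a * (c * θ x) = 0
    linear_combination c * h1
  | succ q ih =>
    intro c θ hθ a
    refine whd_isDiffOp_congr (fun x => ?_) (ih c (hθ a))
    show c * mulCommutator a θ x = mulCommutator a (fun x => c * θ x) x
    show c * (θ (a * x) - a * θ x) = c * θ (a * x) - a * (c * θ x)
    ring

theorem whd_isDiffOp_sum {ι : Type*} (s : Finset ι) (θ : ι → R → R) {q : ℕ}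
    (h : ∀ i ∈ s, IsDiffOpOfOrderLE q (θ i)) :
    IsDiffOpOfOrderLE q (fun x => ∑ i ∈ s, θ i x) := by
  classical
  induction s using Finset.induction_on with
  | empty =>
    refine whd_isDiffOp_congr (fun x => ?_) (whd_isDiffOp_zero q)
    simp
  | insert a s hni ih =>
    refine whd_isDiffOp_congr (fun x => ?_)
      (whd_isDiffOp_add (h a (Finset.mem_insert_self a s))
        (ih (fun i hi => h i (Finset.mem_insert_of_mem hi))))
    rw [Finset.sum_insert hni]

theorem whd_isDiffOp_succ : ∀ {q : ℕ} {θ : R → R}, IsDiffOpOfOrderLE q θ →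
    IsDiffOpOfOrderLE (q + 1) θ := by
  intro q
  induction q with
  | zero =>
    intro θ hθ a
    rw [hθ a]
    exact whd_isDiffOp_zero 0
  | succ q ih =>
    intro θ hθ a
    exact ih (hθ a)

theorem whd_isDiffOp_le {q q' : ℕ} (h : q ≤ q') {θ : R → R}
    (hθ : IsDiffOpOfOrderLE q θ) : IsDiffOpOfOrderLE q' θ := by
  induction q' with
  | zero =>
    have : q = 0 := by omega
    subst this; exact hθ
  | succ q' ih =>
    rcases Nat.lt_or_ge q (q' + 1) with h' | h'
    · exact whd_isDiffOp_succ (ih (by omega))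
    · have : q = q' + 1 := by omega
      subst this; exact hθ

theorem whd_mc_hasse {R : Type*} [CommRing R] (q : ℕ) (a : Polynomial R) :
    mulCommutator a (fun f => Polynomial.hasseDeriv (q + 1) f) =
      fun f => ∑ k ∈ Finset.range (q + 1),
        Polynomial.hasseDeriv (k + 1) a * Polynomial.hasseDeriv (q - k) f := by
  funext f
  show Polynomial.hasseDeriv (q + 1) (a * f) - a * Polynomial.hasseDeriv (q + 1) f = _
  rw [Polynomial.hasseDeriv_mul, Finset.Nat.sum_antidiagonal_eq_sum_range_succ_mk,
    Finset.sum_range_succ']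
  simp only [Nat.succ_sub_succ_eq_sub, Nat.sub_zero, Polynomial.hasseDeriv_zero']
  abel

theorem whd_hasse_isDiffOp_aux (R : Type*) [CommRing R] :
    ∀ N r : ℕ, r ≤ N →
      IsDiffOpOfOrderLE r (fun f : Polynomial R => Polynomial.hasseDeriv r f) := by
  intro N
  induction N with
  | zero =>
    intro r hr
    have : r = 0 := by omega
    subst this
    intro a
    funext f
    show Polynomial.hasseDeriv 0 (a * f) - a * Polynomial.hasseDeriv 0 f = 0
    rw [Polynomial.hasseDeriv_zero', Polynomial.hasseDeriv_zero', sub_self]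
  | succ N ihN =>
    intro r hr
    match r with
    | 0 => exact ihN 0 (by omega)
    | q + 1 =>
      intro a
      rw [whd_mc_hasse]
      refine whd_isDiffOp_sum _ _ (fun k _ => ?_)
      exact whd_isDiffOp_le (show q - k ≤ q by omega)
        (whd_isDiffOp_mul_left _ (ihN (q - k) (by omega)))

theorem whd_hasse_isDiffOp (R : Type*) [CommRing R] (r : ℕ) :
    IsDiffOpOfOrderLE r (fun f : Polynomial R => Polynomial.hasseDeriv r f) :=
  whd_hasse_isDiffOp_aux R r r le_rfl

theorem whd_diffop_transfer {R S : Type*} [CommRing R] [CommRing S] (w : R →+* S)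
    (hinj : Function.Injective w) :
    ∀ (q : ℕ) (θ : S → S) (Dm : R → R), (∀ x, w (Dm x) = θ (w x)) →
      IsDiffOpOfOrderLE q θ → IsDiffOpOfOrderLE q Dm := by
  intro q
  induction q with
  | zero =>
    intro θ Dm hcomm hθ a
    funext x
    apply hinj
    show w (Dm (a * x) - a * Dm x) = w ((0 : R → R) x)
    have h1 : θ (w a * w x) - w a * θ (w x) = 0 := congrFun (hθ (w a)) (w x)
    rw [map_sub, map_mul, hcomm, hcomm, map_mul]
    show θ (w a * w x) - w a * θ (w x) = w 0
    rw [h1, map_zero]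
  | succ q ih =>
    intro θ Dm hcomm hθ a
    refine ih (mulCommutator (w a) θ) (mulCommutator a Dm) (fun x => ?_) (hθ (w a))
    show w (Dm (a * x) - a * Dm x) = θ (w a * w x) - w a * θ (w x)
    rw [map_sub, map_mul, hcomm, hcomm, map_mul]

end DiffOp

/-! ### The subgroup `M_e = ∑_{j ≤ e} p^{e-j}·W[t^{p^j}]` of `W[t]` -/

section Mgrp

open Polynomial

/-- The additive subgroup of `W[t]` generated by the monomials
`p^{e-j}·c·t^{p^j·u}` with `j ≤ e`. -/
noncomputable def Mgrp (p e : ℕ) (W : Type*) [CommRing W] : AddSubgroup (Polynomial W) :=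
  AddSubgroup.closure
    {x | ∃ j c u, j ≤ e ∧ x = Polynomial.monomial (p ^ j * u) ((p : W) ^ (e - j) * c)}

variable {W : Type*} [CommRing W] {p e : ℕ}

theorem whd_mem_gen (j : ℕ) (hj : j ≤ e) (c : W) (u : ℕ) :
    Polynomial.monomial (p ^ j * u) ((p : W) ^ (e - j) * c) ∈ Mgrp p e W :=
  AddSubgroup.subset_closure ⟨j, c, u, hj, rfl⟩

theorem whd_const (c : W) : Polynomial.C c ∈ Mgrp p e W := by
  have h := whd_mem_gen (p := p) (e := e) e le_rfl c 0
  simpa using h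

theorem whd_one : (1 : Polynomial W) ∈ Mgrp p e W := by
  rw [← Polynomial.C_1]
  exact whd_const 1

theorem whd_natCast (N : ℕ) : ((N : ℕ) : Polynomial W) ∈ Mgrp p e W := by
  rw [← Polynomial.C_eq_natCast]
  exact whd_const _

theorem whd_M0 (f : Polynomial W) : f ∈ Mgrp p 0 W := by
  induction f using Polynomial.induction_on' with
  | add f g hf hg => exact add_mem hf hg
  | monomial m a =>
    have h := whd_mem_gen (p := p) (e := 0) 0 le_rfl a m
    simpa using h

theorem whd_gen_mul_gen {j j' : ℕ} (hj : j ≤ e) (hj' : j' ≤ e) (h : j ≤ j') (c c' : W)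
    (u u' : ℕ) :
    Polynomial.monomial (p ^ j * u) ((p : W) ^ (e - j) * c) *
      Polynomial.monomial (p ^ j' * u') ((p : W) ^ (e - j') * c') ∈ Mgrp p e W := by
  rw [Polynomial.monomial_mul_monomial]
  have h1 : p ^ j * u + p ^ j' * u' = p ^ j * (u + p ^ (j' - j) * u') := by
    have h2 : p ^ j' = p ^ j * p ^ (j' - j) := by
      rw [← pow_add]
      congr 1
      omega
    rw [h2]; ring
  have h3 : (p : W) ^ (e - j) * c * ((p : W) ^ (e - j') * c') =
      (p : W) ^ (e - j) * ((p : W) ^ (e - j') * (c * c')) := by ring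
  rw [h1, h3]
  exact whd_mem_gen j hj _ _

theorem whd_mul {x y : Polynomial W} (hx : x ∈ Mgrp p e W) (hy : y ∈ Mgrp p e W) :
    x * y ∈ Mgrp p e W := by
  refine AddSubgroup.closure_induction
    (p := fun x _ => ∀ y, y ∈ Mgrp p e W → x * y ∈ Mgrp p e W) ?_ ?_ ?_ ?_ hx y hy
  · rintro x ⟨j, c, u, hj, rfl⟩ y hy
    refine AddSubgroup.closure_induction
      (p := fun y _ => Polynomial.monomial (p ^ j * u) ((p : W) ^ (e - j) * c) * y
        ∈ Mgrp p e W) ?_ ?_ ?_ ?_ hy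
    · rintro y ⟨j', c', u', hj', rfl⟩
      rcases le_total j j' with h | h
      · exact whd_gen_mul_gen hj hj' h c c' u u'
      · rw [mul_comm]
        exact whd_gen_mul_gen hj' hj h c' c u' u
    · show Polynomial.monomial (p ^ j * u) ((p : W) ^ (e - j) * c) * 0 ∈ Mgrp p e W
      rw [mul_zero]; exact zero_mem _
    · intro a b _ _ ha hb
      show Polynomial.monomial (p ^ j * u) ((p : W) ^ (e - j) * c) * (a + b) ∈ Mgrp p e W
      rw [mul_add]; exact add_mem ha hb
    · intro a _ ha
      show Polynomial.monomial (p ^ j * u) ((p : W) ^ (e - j) * c) * (-a) ∈ Mgrp p e W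
      rw [mul_neg]; exact neg_mem ha
  · intro y _
    show (0 : Polynomial W) * y ∈ Mgrp p e W
    rw [zero_mul]; exact zero_mem _
  · intro a b _ _ ha hb y hy
    show (a + b) * y ∈ Mgrp p e W
    rw [add_mul]; exact add_mem (ha y hy) (hb y hy)
  · intro a _ ha y hy
    show (-a) * y ∈ Mgrp p e W
    rw [neg_mul]; exact neg_mem (ha y hy)

theorem whd_pow {x : Polynomial W} (k : ℕ) (hx : x ∈ Mgrp p e W) : x ^ k ∈ Mgrp p e W := by
  induction k with
  | zero => rw [pow_zero]; exact whd_one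
  | succ k ih => rw [pow_succ]; exact whd_mul ih hx

theorem whd_pmul {x : Polynomial W} (hx : x ∈ Mgrp p e W) :
    (p : Polynomial W) * x ∈ Mgrp p (e + 1) W := by
  refine AddSubgroup.closure_induction
    (p := fun x _ => (p : Polynomial W) * x ∈ Mgrp p (e + 1) W) ?_ ?_ ?_ ?_ hx
  · rintro x ⟨j, c, u, hj, rfl⟩
    have h1 : (p : Polynomial W) * Polynomial.monomial (p ^ j * u) ((p : W) ^ (e - j) * c) =
        Polynomial.monomial (p ^ j * u) ((p : W) * ((p : W) ^ (e - j) * c)) := by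
      rw [← Polynomial.C_eq_natCast, Polynomial.C_mul_monomial]
    have h2 : (p : W) * ((p : W) ^ (e - j) * c) = (p : W) ^ (e + 1 - j) * c := by
      have h3 : e + 1 - j = (e - j) + 1 := by omega
      rw [h3, pow_succ]; ring
    rw [h1, h2]
    exact whd_mem_gen j (by omega) _ _
  · show (p : Polynomial W) * 0 ∈ Mgrp p (e + 1) W
    rw [mul_zero]; exact zero_mem _
  · intro a b _ _ ha hb
    show (p : Polynomial W) * (a + b) ∈ Mgrp p (e + 1) W
    rw [mul_add]; exact add_mem ha hb
  · intro a _ ha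
    show (p : Polynomial W) * (-a) ∈ Mgrp p (e + 1) W
    rw [mul_neg]; exact neg_mem ha

theorem whd_pmul_pow {x : Polynomial W} (k : ℕ) (hx : x ∈ Mgrp p e W) :
    (p : Polynomial W) ^ k * x ∈ Mgrp p (e + k) W := by
  induction k with
  | zero => simpa using hx
  | succ k ih =>
    have h1 : (p : Polynomial W) ^ (k + 1) * x =
        (p : Polynomial W) * ((p : Polynomial W) ^ k * x) := by ring
    rw [h1]
    exact whd_pmul ih

theorem whd_pow_p [hp : Fact p.Prime] {x : Polynomial W} (hx : x ∈ Mgrp p e W) :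
    x ^ p ∈ Mgrp p (e + 1) W := by
  refine AddSubgroup.closure_induction
    (p := fun x _ => x ^ p ∈ Mgrp p (e + 1) W) ?_ ?_ ?_ ?_ hx
  · rintro x ⟨j, c, u, hj, rfl⟩
    rw [Polynomial.monomial_pow]
    have h1 : p ^ j * u * p = p ^ (j + 1) * u := by rw [pow_succ]; ring
    have h2 : ((p : W) ^ (e - j) * c) ^ p =
        (p : W) ^ (e + 1 - (j + 1)) * ((p : W) ^ ((e - j) * (p - 1)) * c ^ p) := by
      have h3 : e + 1 - (j + 1) = e - j := by omega
      rw [h3, mul_pow, ← pow_mul]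
      have h4 : (e - j) * p = (e - j) + (e - j) * (p - 1) := by
        have h5 : 1 + (p - 1) = p := by
          have := hp.out.pos; omega
        calc (e - j) * p = (e - j) * (1 + (p - 1)) := by rw [h5]
          _ = (e - j) + (e - j) * (p - 1) := by ring
      rw [h4, pow_add, mul_assoc]
    rw [h1, h2]
    exact whd_mem_gen (j + 1) (by omega) _ _
  · show (0 : Polynomial W) ^ p ∈ Mgrp p (e + 1) W
    rw [zero_pow hp.out.ne_zero]
    exact zero_mem _
  · intro a b ha hb iha ihb
    show (a + b) ^ p ∈ Mgrp p (e + 1) W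
    rw [add_pow_prime_eq hp.out, mul_assoc, mul_assoc]
    refine add_mem (add_mem iha ihb) (whd_pmul ?_)
    refine whd_mul ha (whd_mul hb (sum_mem (fun k hk => ?_)))
    exact whd_mul (whd_mul (whd_pow (k - 1) ha) (whd_pow (p - k - 1) hb)) (whd_natCast _)
  · intro a _ iha
    show (-a) ^ p ∈ Mgrp p (e + 1) W
    rcases Nat.even_or_odd p with hev | hod
    · rw [hev.neg_pow]; exact iha
    · rw [hod.neg_pow]; exact neg_mem iha

theorem whd_pow_pow [Fact p.Prime] {x : Polynomial W} (k : ℕ) (hx : x ∈ Mgrp p e W) :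
    x ^ p ^ k ∈ Mgrp p (e + k) W := by
  induction k with
  | zero => simpa using hx
  | succ k ih =>
    rw [pow_succ, pow_mul]
    exact whd_pow_p ih

/-- Key arithmetic input: if `p^j ∣ m`, `r < m` and `p^v` exactly divides `m - r` with
`v < j`, then `p^(j-v)` divides the binomial coefficient `C(m, r)`. -/
theorem whd_nt {p : ℕ} (hp : p.Prime) {j v m r : ℕ} (hm : p ^ j ∣ m) (hrm : r < m)
    (hv : p ^ v ∣ m - r) (hnd : ¬ p ^ (v + 1) ∣ m - r) (hvj : v < j) :
    p ^ (j - v) ∣ m.choose r := by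
  have hr0 : r ≠ 0 := by
    rintro rfl
    exact hnd (by simpa using (pow_dvd_pow p (by omega)).trans hm)
  have hm0 : m ≠ 0 := by omega
  have hpv1m : p ^ (v + 1) ∣ m := (pow_dvd_pow p (by omega)).trans hm
  have hpvm : p ^ v ∣ m := (pow_dvd_pow p (by omega)).trans hm
  have hpr : p ^ v ∣ r := by
    have h1 : r = m - (m - r) := by omega
    rw [h1]
    exact Nat.dvd_sub hpvm hv
  have hpr' : ¬ p ^ (v + 1) ∣ r := fun h => hnd (Nat.dvd_sub hpv1m h)
  obtain ⟨t, ht⟩ := hpr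
  have hpt : ¬ p ∣ t := by
    intro h
    exact hpr' (by rw [ht, pow_succ]; exact mul_dvd_mul dvd_rfl h)
  have key : m ∣ m.choose r * r := by
    obtain ⟨m', rfl⟩ := Nat.exists_eq_succ_of_ne_zero hm0
    obtain ⟨r', rfl⟩ := Nat.exists_eq_succ_of_ne_zero hr0
    exact ⟨Nat.choose m' r', (Nat.add_one_mul_choose_eq m' r').symm⟩
  have key2 : p ^ j ∣ m.choose r * t * p ^ v := by
    have h1 : m.choose r * t * p ^ v = m.choose r * r := by rw [ht]; ring
    rw [h1]
    exact hm.trans key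
  have key3 : p ^ (j - v) ∣ m.choose r * t := by
    have h1 : p ^ v * p ^ (j - v) ∣ p ^ v * (m.choose r * t) := by
      rw [← pow_add]
      have h2 : v + (j - v) = j := by omega
      rw [h2]
      have h3 : p ^ v * (m.choose r * t) = m.choose r * t * p ^ v := by ring
      rw [h3]
      exact key2
    exact (mul_dvd_mul_iff_left (show (p ^ v : ℕ) ≠ 0 from (pow_pos hp.pos v).ne')).mp h1
  exact (Nat.Coprime.pow_left _ ((Nat.Prime.coprime_iff_not_dvd hp).mpr hpt)).dvd_of_dvd_mul_right
    key3

/-- Stability of `M_n` under Hasse derivatives. -/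
theorem whd_hasse {p : ℕ} [hp : Fact p.Prime] {W : Type*} [CommRing W] {n : ℕ} (r : ℕ)
    {x : Polynomial W} (hx : x ∈ Mgrp p n W) :
    Polynomial.hasseDeriv r x ∈ Mgrp p n W := by
  refine AddSubgroup.closure_induction
    (p := fun x _ => Polynomial.hasseDeriv r x ∈ Mgrp p n W) ?_ ?_ ?_ ?_ hx
  · rintro x ⟨j, c, u, hj, rfl⟩
    rw [Polynomial.hasseDeriv_monomial]
    by_cases h1 : (p ^ j * u).choose r = 0
    · simp only [h1, Nat.cast_zero, zero_mul, Polynomial.monomial_zero_right]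
      exact zero_mem _
    · have hrm : r ≤ p ^ j * u := by
        by_contra h
        exact h1 (Nat.choose_eq_zero_of_lt (by omega))
      by_cases h2 : p ^ j * u - r = 0
      · rw [h2, Polynomial.monomial_zero_left]
        exact whd_const _
      · set v := padicValNat p (p ^ j * u - r) with hv
        by_cases h3 : j ≤ min v n
        · obtain ⟨u', hu'⟩ : p ^ min v n ∣ p ^ j * u - r :=
            dvd_trans (pow_dvd_pow p (min_le_left _ _)) pow_padicValNat_dvd
          have hminn : min v n ≤ n := min_le_right _ _
          have hco : (↑((p ^ j * u).choose r) : W) * ((p : W) ^ (n - j) * c) =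
              (p : W) ^ (n - min v n) *
                ((p : W) ^ (min v n - j) * (((p ^ j * u).choose r : W) * c)) := by
            have h4 : n - j = (n - min v n) + (min v n - j) := by omega
            rw [h4, pow_add]; ring
          rw [hco, hu']
          exact whd_mem_gen (min v n) hminn _ _
        · have h5 : min v n < j := by omega
          have hvj : v < j := by
            rcases le_total v n with hvn | hvn
            · rwa [min_eq_left hvn] at h5
            · rw [min_eq_right hvn] at h5; omega
          have hdvd := whd_nt hp.out ⟨u, rfl⟩ (show r < p ^ j * u by omega)
            pow_padicValNat_dvd (pow_succ_padicValNat_not_dvd h2) hvj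
          obtain ⟨C', hC'⟩ := hdvd
          obtain ⟨u', hu'⟩ : p ^ v ∣ p ^ j * u - r := pow_padicValNat_dvd
          have hco : (↑((p ^ j * u).choose r) : W) * ((p : W) ^ (n - j) * c) =
              (p : W) ^ (n - v) * ((C' : W) * c) := by
            rw [hC']
            push_cast
            have h6 : n - v = (j - v) + (n - j) := by omega
            rw [h6, pow_add]; ring
          rw [hco, hu']
          exact whd_mem_gen v (by omega) _ _
  · show Polynomial.hasseDeriv r (0 : Polynomial W) ∈ Mgrp p n W
    rw [map_zero]; exact zero_mem _
  · intro a b _ _ ha hb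
    show Polynomial.hasseDeriv r (a + b) ∈ Mgrp p n W
    rw [map_add]; exact add_mem ha hb
  · intro a _ ha
    show Polynomial.hasseDeriv r (-a) ∈ Mgrp p n W
    rw [map_neg]; exact neg_mem ha

end Mgrp

/-! ### Witt vector lemmas -/

section Witt

theorem witt_mul_p_coeff {p : ℕ} [hp : Fact p.Prime] {B : Type*} [CommRing B] [CharP B p] :
    ∀ (k : ℕ) (x : WittVector p B) (i : ℕ), i < k → (x * (p : WittVector p B) ^ k).coeff i = 0 := by
  intro k
  induction k with
  | zero => intro x i h; omega
  | succ k ih =>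
    intro x i h
    have h1 : x * (p : WittVector p B) ^ (k + 1) =
        WittVector.verschiebung (WittVector.frobenius (x * (p : WittVector p B) ^ k)) := by
      rw [WittVector.verschiebung_frobenius]
      ring
    rw [h1]
    cases i with
    | zero => exact WittVector.verschiebung_coeff_zero _
    | succ i =>
      rw [WittVector.verschiebung_coeff_succ, WittVector.coeff_frobenius_charP,
        ih x i (by omega), zero_pow hp.out.ne_zero]

theorem witt_p_pow_zero (p : ℕ) [hp : Fact p.Prime] (n : ℕ) (B : Type*) [CommRing B]
    [CharP B p] : (p : TruncatedWittVector p (n + 1) B) ^ (n + 1) = 0 := by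
  have h : (p : TruncatedWittVector p (n + 1) B) ^ (n + 1) =
      WittVector.truncate (n + 1) ((p : WittVector p B) ^ (n + 1)) := by
    rw [map_pow, map_natCast]
  rw [h]
  ext i
  rw [WittVector.coeff_truncate, TruncatedWittVector.coeff_zero]
  have h2 := witt_mul_p_coeff (n + 1) (1 : WittVector p B) i i.is_lt
  simpa using h2

theorem witt_exists_p_mul {p : ℕ} [hp : Fact p.Prime] {n : ℕ} {B : Type*} [CommRing B]
    [CharP B p] [PerfectRing B p] (c : TruncatedWittVector p (n + 1) B)
    (h0 : c.coeff 0 = 0) : ∃ d, c = p * d := by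
  set y : WittVector p B :=
    WittVector.mk p (fun i => if h : i + 1 < n + 1 then c.coeff ⟨i + 1, h⟩ else 0) with hy
  refine ⟨WittVector.truncate (n + 1) ((WittVector.frobeniusEquiv p B).symm y), ?_⟩
  have h1 : c = WittVector.truncate (n + 1) (WittVector.verschiebung y) := by
    ext i
    rw [WittVector.coeff_truncate]
    rcases i with ⟨i, hi⟩
    cases i with
    | zero =>
      rw [WittVector.verschiebung_coeff_zero]
      simpa using h0
    | succ i =>
      rw [WittVector.verschiebung_coeff_succ, hy]
      have h2 : (WittVector.mk p
          (fun i => if h : i + 1 < n + 1 then c.coeff ⟨i + 1, h⟩ else 0)).coeff i =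
          if h : i + 1 < n + 1 then c.coeff ⟨i + 1, h⟩ else 0 := by
        rw [WittVector.coeff_mk]
      rw [h2, dif_pos hi]
  have h3 : WittVector.verschiebung y = (WittVector.frobeniusEquiv p B).symm y * p := by
    conv_lhs => rw [← (WittVector.frobeniusEquiv p B).apply_symm_apply y]
    rw [WittVector.frobeniusEquiv_apply, WittVector.verschiebung_frobenius]
  rw [h1, h3, map_mul, map_natCast, mul_comm]

theorem witt_teich_decomp {p : ℕ} [hp : Fact p.Prime] {n : ℕ} {B : Type*} [CommRing B]
    [CharP B p] [PerfectRing B p] (res : TruncatedWittVector p (n + 1) B →+* B)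
    (hres : ∀ c, res c = c.coeff 0) (c : TruncatedWittVector p (n + 1) B) :
    ∃ b : ℕ → B, c = ∑ k ∈ Finset.range (n + 1),
      (p : TruncatedWittVector p (n + 1) B) ^ k *
        WittVector.truncate (n + 1) (WittVector.teichmuller p (b k)) := by
  have key : ∀ m : ℕ, ∃ (b : ℕ → B) (d : TruncatedWittVector p (n + 1) B),
      c = (∑ k ∈ Finset.range m, (p : TruncatedWittVector p (n + 1) B) ^ k *
        WittVector.truncate (n + 1) (WittVector.teichmuller p (b k))) +
        (p : TruncatedWittVector p (n + 1) B) ^ m * d := by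
    intro m
    induction m with
    | zero => exact ⟨fun _ => 0, c, by simp⟩
    | succ m ih =>
      obtain ⟨b, d, hbd⟩ := ih
      have hres_teich : ∀ x : B,
          res (WittVector.truncate (n + 1) (WittVector.teichmuller p x)) = x := by
        intro x
        rw [hres, WittVector.coeff_truncate]
        exact WittVector.teichmuller_coeff_zero p x
      have h0 : (d - WittVector.truncate (n + 1) (WittVector.teichmuller p (res d))).coeff 0
          = 0 := by
        have h1 : res (d - WittVector.truncate (n + 1) (WittVector.teichmuller p (res d)))
            = 0 := by
          rw [map_sub, hres_teich, sub_self]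
        rwa [hres] at h1
      obtain ⟨d', hd'⟩ := witt_exists_p_mul _ h0
      refine ⟨Function.update b m (res d), d', ?_⟩
      have hd : d = WittVector.truncate (n + 1) (WittVector.teichmuller p (res d)) + p * d' := by
        have h2 := hd'
        have : d - WittVector.truncate (n + 1) (WittVector.teichmuller p (res d)) = p * d' := h2
        linear_combination this
      rw [Finset.sum_range_succ, Function.update_self]
      have hsum : ∀ k ∈ Finset.range m,
          (p : TruncatedWittVector p (n + 1) B) ^ k *
            WittVector.truncate (n + 1) (WittVector.teichmuller p (Function.update b m (res d) k))
          = (p : TruncatedWittVector p (n + 1) B) ^ k *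
            WittVector.truncate (n + 1) (WittVector.teichmuller p (b k)) := by
        intro k hk
        rw [Function.update_of_ne (by simp at hk; omega)]
      rw [Finset.sum_congr rfl hsum, hbd]
      linear_combination ((p : TruncatedWittVector p (n + 1) B) ^ m) * hd'
  obtain ⟨b, d, hbd⟩ := key (n + 1)
  refine ⟨b, ?_⟩
  rw [hbd, witt_p_pow_zero, zero_mul, add_zero]

end Witt

/-! ### The main theorem -/

/-- Let `B` be a perfect ring of characteristic `p`, `C = B[t]`,
`C_{n+1} = W_{n+1}(B)[t]`, `ρ : C_{n+1} → C` the coefficientwise residue reduction, and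
`w̃_n : W_{n+1}(C) → C_{n+1}` the injective ring homomorphism
`(f₁,…,f_{n+1}) ↦ ∑ pⁱ f̃_{i+1}^{p^{n-i}}` (for arbitrary coefficient lifts along `ρ`).
Then the `r`-th Hasse derivative `∂^{[r]}` preserves the image of `w̃_n`: there is a unique
map `D^{[r]} : W_{n+1}(C) → W_{n+1}(C)` with `w̃_n ∘ D^{[r]} = ∂^{[r]} ∘ w̃_n`, and it is a
`W_{n+1}(B)`-linear differential operator of order `≤ r`. -/
theorem wittHasseDeriv_exists (p : ℕ) [Fact p.Prime] (n : ℕ)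
    (B : Type*) [CommRing B] [CharP B p]
    (hperf : Function.Bijective fun x : B => x ^ p)
    (res : TruncatedWittVector p (n + 1) B →+* B)
    (hres : ∀ c : TruncatedWittVector p (n + 1) B, res c = c.coeff 0)
    (wt : TruncatedWittVector p (n + 1) (Polynomial B) →+*
      Polynomial (TruncatedWittVector p (n + 1) B))
    (hwtinj : Function.Injective wt)
    (hwt : ∀ (x : TruncatedWittVector p (n + 1) (Polynomial B))
        (g : Fin (n + 1) → Polynomial (TruncatedWittVector p (n + 1) B)),
      (∀ i, Polynomial.map res (g i) = x.coeff i) →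
      wt x = ∑ i : Fin (n + 1),
        (p : Polynomial (TruncatedWittVector p (n + 1) B)) ^ (i : ℕ) *
          g i ^ p ^ (n - (i : ℕ)))
    (r : ℕ) :
    ∃ D : TruncatedWittVector p (n + 1) (Polynomial B) →
        TruncatedWittVector p (n + 1) (Polynomial B),
      (∀ x, wt (D x) = Polynomial.hasseDeriv r (wt x)) ∧
      (∀ D' : TruncatedWittVector p (n + 1) (Polynomial B) →
          TruncatedWittVector p (n + 1) (Polynomial B),
        (∀ x, wt (D' x) = Polynomial.hasseDeriv r (wt x)) → D' = D) ∧
      (∀ x y, D (x + y) = D x + D y) ∧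
      (∀ (b : TruncatedWittVector p (n + 1) B) x,
        D (twMap p (n + 1) (Polynomial.C (R := B)) b * x) =
          twMap p (n + 1) (Polynomial.C (R := B)) b * D x) ∧
      IsDiffOpOfOrderLE r D := by
  classical
  haveI : ExpChar B p := ExpChar.prime Fact.out
  haveI : PerfectRing B p := by
    constructor
    have h : ⇑(frobenius B p) = fun x : B => x ^ p := by
      funext x; exact frobenius_def p x
    exact hperf
  -- surjectivity of `res`
  have hres_surj : Function.Surjective res := fun b =>
    ⟨TruncatedWittVector.mk p (fun _ => b), by rw [hres, TruncatedWittVector.coeff_mk]⟩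
  -- surjectivity of p^s powers in B
  have hpow : ∀ s : ℕ, Function.Surjective (fun x : B => x ^ p ^ s) := by
    intro s
    induction s with
    | zero => intro b; exact ⟨b, by simp⟩
    | succ s ih =>
      intro b
      obtain ⟨x1, hx1⟩ := hperf.2 b
      obtain ⟨x2, hx2⟩ := ih x1
      have hx1' : x1 ^ p = b := hx1
      have hx2' : x2 ^ p ^ s = x1 := hx2
      refine ⟨x2, ?_⟩
      show x2 ^ p ^ (s + 1) = b
      rw [pow_succ, pow_mul, hx2']
      exact hx1'
  -- the image of wt is contained in the subgroup M_n
  have hrange_sub : ∀ x, wt x ∈ Mgrp p n (TruncatedWittVector p (n + 1) B) := by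
    intro x
    choose g hg using fun i : Fin (n + 1) =>
      Polynomial.map_surjective res hres_surj (x.coeff i)
    rw [hwt x g hg]
    refine sum_mem (fun i _ => ?_)
    have h1 : g i ∈ Mgrp p 0 (TruncatedWittVector p (n + 1) B) := whd_M0 _
    have h2 := whd_pow_pow (n - (i : ℕ)) h1
    have h3 := whd_pmul_pow (i : ℕ) h2
    have h4 : 0 + (n - (i : ℕ)) + (i : ℕ) = n := by
      have := i.isLt; omega
    rwa [h4] at h3
  -- M_n is contained in the image of wt
  have hM_sub : ∀ f ∈ Mgrp p n (TruncatedWittVector p (n + 1) B), f ∈ wt.range := by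
    intro f hf
    refine AddSubgroup.closure_induction (p := fun f _ => f ∈ wt.range) ?_ (zero_mem _)
      (fun a b _ _ ha hb => add_mem ha hb) (fun a _ ha => neg_mem ha) hf
    rintro f ⟨j, c, u, hj, rfl⟩
    obtain ⟨b, hb⟩ := witt_teich_decomp res hres c
    rw [hb, Finset.mul_sum, map_sum]
    refine sum_mem (fun k hk => ?_)
    have hkn : k ≤ n := by
      rw [Finset.mem_range] at hk; omega
    have hco : (p : TruncatedWittVector p (n + 1) B) ^ (n - j) *
        ((p : TruncatedWittVector p (n + 1) B) ^ k *
          WittVector.truncate (n + 1) (WittVector.teichmuller p (b k))) =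
        (p : TruncatedWittVector p (n + 1) B) ^ ((n - j) + k) *
          WittVector.truncate (n + 1) (WittVector.teichmuller p (b k)) := by
      rw [pow_add]; ring
    rw [hco]
    by_cases hkj : k ≤ j
    · -- honest generator: realize as wt of a single-coefficient Witt vector
      obtain ⟨b', hb'⟩ := hpow (j - k) (b k)
      set Tb' : TruncatedWittVector p (n + 1) B :=
        WittVector.truncate (n + 1) (WittVector.teichmuller p b') with hTb'def
      set G : Fin (n + 1) → Polynomial (TruncatedWittVector p (n + 1) B) :=
        fun i => if (i : ℕ) = (n - j) + k then
          Polynomial.C Tb' * Polynomial.X ^ (p ^ k * u) else 0 with hG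
      refine RingHom.mem_range.mpr
        ⟨TruncatedWittVector.mk p (fun i => Polynomial.map res (G i)), ?_⟩
      rw [hwt _ G (fun i => by rw [TruncatedWittVector.coeff_mk])]
      have hlt : (n - j) + k < n + 1 := by omega
      rw [Finset.sum_eq_single (⟨(n - j) + k, hlt⟩ : Fin (n + 1))]
      · have hGval : G ⟨(n - j) + k, hlt⟩ = Polynomial.C Tb' * Polynomial.X ^ (p ^ k * u) := by
          rw [hG]
          exact if_pos rfl
        have hvl : ((⟨(n - j) + k, hlt⟩ : Fin (n + 1)) : ℕ) = (n - j) + k := rfl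
        rw [hGval, hvl]
        have hnio : n - ((n - j) + k) = j - k := by omega
        rw [hnio]
        have hmp : (Polynomial.C Tb' * Polynomial.X ^ (p ^ k * u)) ^ p ^ (j - k) =
            Polynomial.C (Tb' ^ p ^ (j - k)) * Polynomial.X ^ (p ^ k * u * p ^ (j - k)) := by
          rw [mul_pow, ← Polynomial.C_pow, ← pow_mul]
        have hb'' : b' ^ p ^ (j - k) = b k := hb'
        have hTb : Tb' ^ p ^ (j - k) =
            WittVector.truncate (n + 1) (WittVector.teichmuller p (b k)) := by
          rw [hTb'def, ← map_pow, ← map_pow, hb'']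
        have hexp : p ^ k * u * p ^ (j - k) = p ^ j * u := by
          have h1 : p ^ k * u * p ^ (j - k) = (p ^ k * p ^ (j - k)) * u := by ring
          rw [h1, ← pow_add]
          have h2 : k + (j - k) = j := by omega
          rw [h2]
        rw [hmp, hTb, hexp]
        have hcast : ((p : Polynomial (TruncatedWittVector p (n + 1) B)) ^ ((n - j) + k)) =
            Polynomial.C ((p : TruncatedWittVector p (n + 1) B) ^ ((n - j) + k)) := by
          rw [map_pow, map_natCast]
        rw [hcast, ← mul_assoc, ← Polynomial.C_mul, Polynomial.C_mul_X_pow_eq_monomial]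
      · intro i _ hne
        have hGz : G i = 0 := by
          rw [hG]
          refine if_neg (fun h => hne ?_)
          exact Fin.ext h
        rw [hGz, zero_pow (pow_ne_zero _ (Nat.Prime.ne_zero Fact.out)), mul_zero]
      · intro h
        exact absurd (Finset.mem_univ _) h
    · -- degenerate case: the coefficient vanishes since p^{n+1} = 0
      have hz : (p : TruncatedWittVector p (n + 1) B) ^ ((n - j) + k) = 0 := by
        have h1 : (n - j) + k = (n + 1) + ((n - j) + k - (n + 1)) := by omega
        rw [h1, pow_add, witt_p_pow_zero, zero_mul]
      rw [hz, zero_mul, Polynomial.monomial_zero_right]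
      exact zero_mem _
  -- stability of the image under the Hasse derivative
  have stab : ∀ x, ∃ y, wt y = Polynomial.hasseDeriv r (wt x) := by
    intro x
    have h1 := whd_hasse r (hrange_sub x)
    exact RingHom.mem_range.mp (hM_sub _ h1)
  choose D hD using stab
  -- constants are preserved by wt
  have htwcoeff : ∀ (b : TruncatedWittVector p (n + 1) B) (i : Fin (n + 1)),
      (twMap p (n + 1) (Polynomial.C (R := B)) b).coeff i = Polynomial.C (b.coeff i) := by
    intro b i
    have hout : WittVector.truncate (n + 1) b.out = b :=
      TruncatedWittVector.truncateFun_out b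
    have h1 : twMap p (n + 1) (Polynomial.C (R := B)) b =
        WittVector.truncate (n + 1) (WittVector.map (Polynomial.C (R := B)) b.out) := by
      conv_lhs => rw [← hout]
      exact RingHom.liftOfRightInverse_comp_apply _ _ _ _ _
    rw [h1, WittVector.coeff_truncate, WittVector.map_coeff, TruncatedWittVector.coeff_out]
  have hconst : ∀ b : TruncatedWittVector p (n + 1) B,
      ∃ a, wt (twMap p (n + 1) (Polynomial.C (R := B)) b) = Polynomial.C a := by
    intro b
    choose cc hcc using fun i : Fin (n + 1) => hres_surj (b.coeff i)
    refine ⟨∑ i : Fin (n + 1), (p : TruncatedWittVector p (n + 1) B) ^ (i : ℕ) *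
      (cc i) ^ p ^ (n - (i : ℕ)), ?_⟩
    rw [hwt _ (fun i => Polynomial.C (cc i))
      (fun i => by rw [Polynomial.map_C, hcc, htwcoeff])]
    simp only [map_sum, map_mul, map_pow, map_natCast]
  have hCmul : ∀ (a : TruncatedWittVector p (n + 1) B)
      (f : Polynomial (TruncatedWittVector p (n + 1) B)),
      Polynomial.hasseDeriv r (Polynomial.C a * f) = Polynomial.C a *
        Polynomial.hasseDeriv r f := by
    intro a f
    rw [← Polynomial.smul_eq_C_mul, ← Polynomial.smul_eq_C_mul, LinearMap.map_smul]
  refine ⟨D, hD, ?_, ?_, ?_, ?_⟩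
  · intro D' hD'
    funext x
    exact hwtinj ((hD' x).trans (hD x).symm)
  · intro x y
    apply hwtinj
    rw [hD, map_add wt, map_add, map_add wt, hD, hD]
  · intro b x
    obtain ⟨a, ha⟩ := hconst b
    apply hwtinj
    rw [hD, map_mul wt, ha, hCmul, ← hD, ← ha, ← map_mul wt]
  · exact whd_diffop_transfer wt hwtinj r _ D hD
      (whd_hasse_isDiffOp (TruncatedWittVector p (n + 1) B) r)
end

section
/- Let p be a prime, k a perfect field of characteristic p, d ≥ 1, n ≥ 0, A := k[t₁,…,t_d], A_{n+1} := W_{n+1}(k)[t₁,…,t_d], π : A_{n+1} → A the coefficientwise reduction, and w̃_n : W_{n+1}(A) → A_{n+1} the canonical injective ring homomorphism (f₁,…,f_{n+1}) ↦ Σ_{i=0}^n pⁱ·f̃_{i+1}^{p^{n−i}} (f̃_j any lift of f_j along π). Suppose (D^{[𝐦]})_{𝐦∈ℕ^d} and (D′^{[𝐦]})_{𝐦∈ℕ^d} are two families of W_{n+1}(k)-linear endomorphisms of A_{n+1} with D^{[𝟎]} = D′^{[𝟎]} = id, each satisfying the Hasse–Schmidt expansion D^{[𝐦]}(xy) = Σ_{𝐢+𝐣=𝐦}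 D^{[𝐢]}(x)·D^{[𝐣]}(y) for all x, y ∈ A_{n+1} and 𝐦 ∈ ℕ^d, and both lifting the standard Hasse derivatives of A, i.e. π ∘ D^{[𝐦]} = ∂^{[𝐦]} ∘ π = π ∘ D′^{[𝐦]} for all 𝐦. Then D^{[𝐫]} ∘ w̃_n = D′^{[𝐫]} ∘ w̃_n for every 𝐫 ∈ ℕ^d; that is, the restriction to W_{n+1}(A) of a Hasse–Schmidt lift of ∂^{[𝐫]} does not depend on the chosen lift. -/
/-- The multivariate Hasse derivative `∂^{[𝐛]}` on `R[t₁,…,t_d]`: it sends a monomial `t^𝐞` to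
`(∏ⱼ binom(eⱼ, bⱼ)) · t^{𝐞−𝐛}` (zero if `eⱼ < bⱼ` for some `j`); it is the composite of the
one-variable Hasse derivatives `∂_j^{[bⱼ]}` in the separate variables. -/
noncomputable def mvHasseDeriv {d : ℕ} {R : Type*} [CommRing R] (b : Fin d →₀ ℕ)
    (f : MvPolynomial (Fin d) R) : MvPolynomial (Fin d) R :=
  ∑ e ∈ f.support,
    MvPolynomial.monomial (e - b)
      (((∏ j ∈ b.support, (e j).choose (b j) : ℕ) : R) * MvPolynomial.coeff e f)

/-- In `W_{n+1}(k)` with `k` a perfect ring of characteristic `p`, every element whose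
zeroth coefficient vanishes is divisible by `p`. -/
private lemma truncatedWitt_p_dvd (p : ℕ) [hp : Fact p.Prime] (k : Type*) [CommRing k]
    [CharP k p] [PerfectRing k p] (n : ℕ) (c : TruncatedWittVector p (n + 1) k)
    (hc : c.coeff 0 = 0) : (p : TruncatedWittVector p (n + 1) k) ∣ c := by
  obtain ⟨ct, rfl⟩ := WittVector.truncate_surjective p (n + 1) k c
  have hc0 : ct.coeff 0 = 0 := by
    have h := WittVector.coeff_truncate ct (0 : Fin (n + 1))
    rw [hc] at h
    exact h.symm
  have hV : WittVector.verschiebung (WittVector.mk p fun i => ct.coeff (i + 1)) = ct := by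
    ext i
    cases i with
    | zero => rw [WittVector.verschiebung_coeff_zero, hc0]
    | succ j =>
      rw [WittVector.verschiebung_coeff_succ]
      simp [WittVector.coeff_mk]
  obtain ⟨y, hy⟩ := (WittVector.frobenius_bijective p k).surjective
    (WittVector.mk p fun i => ct.coeff (i + 1))
  have hct : ct = y * p := by
    rw [← WittVector.verschiebung_frobenius, hy, hV]
  refine ⟨WittVector.truncate (n + 1) y, ?_⟩
  rw [hct, map_mul, map_natCast, mul_comm]

/-- In `W_{n+1}(k)` with `char k = p`, we have `p^{n+1} = 0`. -/
private lemma truncatedWitt_p_pow_zero (p : ℕ) [hp : Fact p.Prime] (k : Type*) [CommRing k]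
    [Nontrivial k] [CharP k p] (n : ℕ) :
    (p : TruncatedWittVector p (n + 1) k) ^ (n + 1) = 0 := by
  have h : (p : TruncatedWittVector p (n + 1) k) ^ (n + 1)
      = WittVector.truncate (n + 1) ((p : WittVector p k) ^ (n + 1)) := by
    rw [map_pow, map_natCast]
  rw [h]
  ext i
  rw [WittVector.coeff_truncate,
    WittVector.coeff_p_pow_eq_zero p k (Nat.ne_of_lt i.isLt)]
  simp

private lemma mvps_C_dvd {σ R : Type*} [CommRing R] {a : R} {φ : MvPowerSeries σ R}
    (h : ∀ m, a ∣ MvPowerSeries.coeff m φ) : MvPowerSeries.C a ∣ φ := by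
  choose ψ hψ using h
  refine ⟨(ψ : MvPowerSeries σ R), MvPowerSeries.ext fun m => ?_⟩
  exact (hψ m).trans (MvPowerSeries.coeff_C_mul (σ := σ) m ψ a).symm

private lemma mvps_dvd_coeff {σ R : Type*} [CommRing R] {a : R} {φ : MvPowerSeries σ R}
    (h : MvPowerSeries.C a ∣ φ) (m : σ →₀ ℕ) : a ∣ MvPowerSeries.coeff m φ := by
  obtain ⟨ψ, rfl⟩ := h
  exact ⟨MvPowerSeries.coeff m ψ, MvPowerSeries.coeff_C_mul m ψ a⟩

/-- Let `k` be a perfect field of characteristic `p`,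
`A = k[t₁,…,t_d]`, `A_{n+1} = W_{n+1}(k)[t₁,…,t_d]`, `π : A_{n+1} → A` the coefficientwise
reduction, and `w̃_n : W_{n+1}(A) → A_{n+1}` the canonical injective ring homomorphism given
on coefficient lifts by `(f₁,…,f_{n+1}) ↦ ∑ pⁱ f̃_{i+1}^{p^{n-i}}`.  If `(D^{[𝐦]})` and
`(D′^{[𝐦]})` are two Hasse–Schmidt families of `W_{n+1}(k)`-linear endomorphisms of
`A_{n+1}` lifting the standard Hasse derivatives of `A`, then
`D^{[𝐫]} ∘ w̃_n = D′^{[𝐫]} ∘ w̃_n` for every `𝐫`: the restriction to `W_{n+1}(A)` does not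
depend on the chosen Hasse–Schmidt lift. -/
theorem hasseSchmidt_lift_restriction_unique (p : ℕ) [Fact p.Prime]
    (k : Type*) [Field k] [CharP k p] [PerfectRing k p]
    (d n : ℕ) (hd : 1 ≤ d)
    (res : TruncatedWittVector p (n + 1) k →+* k)
    (hres : ∀ c : TruncatedWittVector p (n + 1) k, res c = c.coeff 0)
    (wt : TruncatedWittVector p (n + 1) (MvPolynomial (Fin d) k) →+*
      MvPolynomial (Fin d) (TruncatedWittVector p (n + 1) k))
    (hwt : ∀ (x : TruncatedWittVector p (n + 1) (MvPolynomial (Fin d) k))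
        (g : Fin (n + 1) → MvPolynomial (Fin d) (TruncatedWittVector p (n + 1) k)),
      (∀ i, MvPolynomial.map res (g i) = x.coeff i) →
      wt x = ∑ i : Fin (n + 1),
        (p : MvPolynomial (Fin d) (TruncatedWittVector p (n + 1) k)) ^ (i : ℕ)
          * g i ^ p ^ (n - (i : ℕ)))
    (D D' : (Fin d →₀ ℕ) → MvPolynomial (Fin d) (TruncatedWittVector p (n + 1) k) →
      MvPolynomial (Fin d) (TruncatedWittVector p (n + 1) k))
    -- both families consist of `W_{n+1}(k)`-linear endomorphisms
    (hDadd : ∀ m x y, D m (x + y) = D m x + D m y)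
    (hD'add : ∀ m x y, D' m (x + y) = D' m x + D' m y)
    (hDlin : ∀ m (c : TruncatedWittVector p (n + 1) k) x,
      D m (MvPolynomial.C c * x) = MvPolynomial.C c * D m x)
    (hD'lin : ∀ m (c : TruncatedWittVector p (n + 1) k) x,
      D' m (MvPolynomial.C c * x) = MvPolynomial.C c * D' m x)
    -- with `D^{[𝟎]} = D′^{[𝟎]} = id`
    (hD0 : D 0 = id) (hD'0 : D' 0 = id)
    -- each satisfying the Hasse–Schmidt expansion
    (hDHS : ∀ m x y, D m (x * y) = ∑ ij ∈ Finset.HasAntidiagonal.antidiagonal m, D ij.1 x * D ij.2 y)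
    (hD'HS : ∀ m x y, D' m (x * y) = ∑ ij ∈ Finset.HasAntidiagonal.antidiagonal m, D' ij.1 x * D' ij.2 y)
    -- and both lifting the standard Hasse derivatives of `A`
    (hDlift : ∀ m g, MvPolynomial.map res (D m g) = mvHasseDeriv m (MvPolynomial.map res g))
    (hD'lift : ∀ m g, MvPolynomial.map res (D' m g) = mvHasseDeriv m (MvPolynomial.map res g))
    (r : Fin d →₀ ℕ) (x : TruncatedWittVector p (n + 1) (MvPolynomial (Fin d) k)) :
    D r (wt x) = D' r (wt x) := by
  classical
  have hCp : (p : MvPolynomial (Fin d) (TruncatedWittVector p (n + 1) k)) = MvPolynomial.C (p : TruncatedWittVector p (n + 1) k) := (map_natCast MvPolynomial.C p).symm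
  -- kernel of coefficientwise reduction is (p)
  have hker : ∀ y : MvPolynomial (Fin d) (TruncatedWittVector p (n + 1) k), MvPolynomial.map res y = 0 → (p : MvPolynomial (Fin d) (TruncatedWittVector p (n + 1) k)) ∣ y := by
    intro y hy
    rw [hCp, MvPolynomial.C_dvd_iff_dvd_coeff]
    intro m
    apply truncatedWitt_p_dvd p k n
    rw [← hres]
    rw [← MvPolynomial.coeff_map, hy, MvPolynomial.coeff_zero]
  -- the key congruence
  have key : ∀ (g : MvPolynomial (Fin d) (TruncatedWittVector p (n + 1) k)) (s : ℕ),
      (p : MvPolynomial (Fin d) (TruncatedWittVector p (n + 1) k)) ^ (s + 1) ∣ D r (g ^ p ^ s) - D' r (g ^ p ^ s) := by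
    intro g s
    let E : MvPolynomial (Fin d) (TruncatedWittVector p (n + 1) k) → MvPowerSeries (Fin d) (MvPolynomial (Fin d) (TruncatedWittVector p (n + 1) k)) := fun h m => D m h
    let E' : MvPolynomial (Fin d) (TruncatedWittVector p (n + 1) k) → MvPowerSeries (Fin d) (MvPolynomial (Fin d) (TruncatedWittVector p (n + 1) k)) := fun h m => D' m h
    have hEc : ∀ (h : MvPolynomial (Fin d) (TruncatedWittVector p (n + 1) k)) m, MvPowerSeries.coeff m (E h) = D m h := fun _ _ => rfl
    have hE'c : ∀ (h : MvPolynomial (Fin d) (TruncatedWittVector p (n + 1) k)) m, MvPowerSeries.coeff m (E' h) = D' m h := fun _ _ => rfl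
    have hEmul : ∀ a b : MvPolynomial (Fin d) (TruncatedWittVector p (n + 1) k), E (a * b) = E a * E b := by
      intro a b
      apply MvPowerSeries.ext; intro m
      rw [MvPowerSeries.coeff_mul, hEc, hDHS]
      exact Finset.sum_congr rfl fun ij _ => by rw [hEc, hEc]
    have hE'mul : ∀ a b : MvPolynomial (Fin d) (TruncatedWittVector p (n + 1) k), E' (a * b) = E' a * E' b := by
      intro a b
      apply MvPowerSeries.ext; intro m
      rw [MvPowerSeries.coeff_mul, hE'c, hD'HS]
      exact Finset.sum_congr rfl fun ij _ => by rw [hE'c, hE'c]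
    have hEpow : ∀ (h : MvPolynomial (Fin d) (TruncatedWittVector p (n + 1) k)) (N : ℕ), 1 ≤ N → E (h ^ N) = (E h) ^ N := by
      intro h N hN
      induction N, hN using Nat.le_induction with
      | base => rw [pow_one, pow_one]
      | succ N hN ih => rw [pow_succ, hEmul, ih, pow_succ]
    have hE'pow : ∀ (h : MvPolynomial (Fin d) (TruncatedWittVector p (n + 1) k)) (N : ℕ), 1 ≤ N → E' (h ^ N) = (E' h) ^ N := by
      intro h N hN
      induction N, hN using Nat.le_induction with
      | base => rw [pow_one, pow_one]
      | succ N hN ih => rw [pow_succ, hE'mul, ih, pow_succ]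
    have hCps : (p : MvPowerSeries (Fin d) (MvPolynomial (Fin d) (TruncatedWittVector p (n + 1) k))) = MvPowerSeries.C (p : MvPolynomial (Fin d) (TruncatedWittVector p (n + 1) k)) :=
      (map_natCast (MvPowerSeries.C) p).symm
    have hdvd : (p : MvPowerSeries (Fin d) (MvPolynomial (Fin d) (TruncatedWittVector p (n + 1) k))) ∣ E g - E' g := by
      rw [hCps]
      apply mvps_C_dvd
      intro m
      rw [map_sub, hEc, hE'c]
      apply hker
      rw [map_sub, hDlift, hD'lift, sub_self]
    have h3 := dvd_sub_pow_of_dvd_sub hdvd s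
    have hone : 1 ≤ p ^ s := Nat.one_le_pow _ _ (Fact.out : p.Prime).pos
    rw [← hEpow g _ hone, ← hE'pow g _ hone] at h3
    have h4 : MvPowerSeries.C ((p : MvPolynomial (Fin d) (TruncatedWittVector p (n + 1) k)) ^ (s + 1)) ∣ E (g ^ p ^ s) - E' (g ^ p ^ s) := by
      rwa [map_pow, ← hCps]
    have h5 := mvps_dvd_coeff h4 r
    rwa [map_sub, hEc, hE'c] at h5
  -- choose coefficient lifts
  have hsur : Function.Surjective (MvPolynomial.map (σ := Fin d) res) := by
    apply MvPolynomial.map_surjective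
    intro a
    exact ⟨TruncatedWittVector.mk p (fun _ => a), by rw [hres, TruncatedWittVector.coeff_mk]⟩
  choose g hg using fun i : Fin (n + 1) => hsur (x.coeff i)
  rw [hwt x g hg]
  -- expand D r and D' r over the sum
  have e1 : D r (∑ i : Fin (n + 1), (p : MvPolynomial (Fin d) (TruncatedWittVector p (n + 1) k)) ^ (i : ℕ) * g i ^ p ^ (n - (i : ℕ)))
      = ∑ i : Fin (n + 1), (p : MvPolynomial (Fin d) (TruncatedWittVector p (n + 1) k)) ^ (i : ℕ) * D r (g i ^ p ^ (n - (i : ℕ))) := by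
    refine (map_sum (AddMonoidHom.mk' (D r) (hDadd r)) _ Finset.univ).trans ?_
    refine Finset.sum_congr rfl fun i _ => ?_
    show D r _ = _
    have hp2 : (p : MvPolynomial (Fin d) (TruncatedWittVector p (n + 1) k)) ^ (i : ℕ) = MvPolynomial.C ((p : TruncatedWittVector p (n + 1) k) ^ (i : ℕ)) := by
      rw [hCp, map_pow]
    rw [hp2, hDlin r]
  have e1' : D' r (∑ i : Fin (n + 1), (p : MvPolynomial (Fin d) (TruncatedWittVector p (n + 1) k)) ^ (i : ℕ) * g i ^ p ^ (n - (i : ℕ)))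
      = ∑ i : Fin (n + 1), (p : MvPolynomial (Fin d) (TruncatedWittVector p (n + 1) k)) ^ (i : ℕ) * D' r (g i ^ p ^ (n - (i : ℕ))) := by
    refine (map_sum (AddMonoidHom.mk' (D' r) (hD'add r)) _ Finset.univ).trans ?_
    refine Finset.sum_congr rfl fun i _ => ?_
    show D' r _ = _
    have hp2 : (p : MvPolynomial (Fin d) (TruncatedWittVector p (n + 1) k)) ^ (i : ℕ) = MvPolynomial.C ((p : TruncatedWittVector p (n + 1) k) ^ (i : ℕ)) := by
      rw [hCp, map_pow]
    rw [hp2, hD'lin r]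
  rw [e1, e1']
  refine Finset.sum_congr rfl fun i _ => ?_
  obtain ⟨c, hc⟩ := key (g i) (n - (i : ℕ))
  have hi : (i : ℕ) ≤ n := Nat.lt_succ_iff.mp i.isLt
  have hpz : (p : MvPolynomial (Fin d) (TruncatedWittVector p (n + 1) k)) ^ (n + 1) = 0 := by
    rw [hCp, ← map_pow, truncatedWitt_p_pow_zero p k n, map_zero]
  have hD : D r (g i ^ p ^ (n - (i : ℕ)))
      = D' r (g i ^ p ^ (n - (i : ℕ))) + (p : MvPolynomial (Fin d) (TruncatedWittVector p (n + 1) k)) ^ (n - (i : ℕ) + 1) * c := by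
    rw [← hc]; ring
  rw [hD, mul_add, ← mul_assoc, ← pow_add]
  have hexp : (i : ℕ) + (n - (i : ℕ) + 1) = n + 1 := by omega
  rw [hexp, hpz, zero_mul, add_zero]
end

section
/- Let p be a prime, k a perfect field of characteristic p, d ≥ 1, n ≥ 1, A := k[t₁,…,t_d], A_m := W_m(k)[t₁,…,t_d] for m ∈ {n, n+1}, and let w̃_{m−1} : W_m(A) → A_m be the canonical injective ring homomorphisms (f₁,…,f_m) ↦ Σ_{i=0}^{m−1} pⁱ·f̃_{i+1}^{p^{m−1−i}}. Fix 1 ≤ j ≤ d and r ≥ 0, and set ∂_j^{[r/p]} to be the (r/p)-th Hasse derivative in t_j if p ∣ r, and the zero map if p ∤ r. Suppose D_{n+1}^{[r]}, D_{n+1}^{[r/p]} : W_{n+1}(A) → W_{n+1}(A) and D_n^{[r]}, D_n^{[r/p]} : W_n(A) → W_n(A) are maps satisfying w̃_n ∘ D_{n+1}^{[s]} = ∂_j^{[s]} ∘ w̃_n and w̃_{n−1} ∘ D_n^{[s]} = ∂_j^{[s]} ∘ w̃_{n−1} for s ∈ {r, r/p}. Then: (i) D_n^{[r/p]} ∘ R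 = R ∘ D_{n+1}^{[r]}, where R : W_{n+1}(A) → W_n(A) is the restriction; (ii) D_{n+1}^{[r]} ∘ Φ_A = Φ_A ∘ D_{n+1}^{[r/p]}, where Φ_A := W_{n+1}(x ↦ x^p) is the Witt-functorial Frobenius of W_{n+1}(A); (iii) D_{n+1}^{[r]} ∘ V = V ∘ D_n^{[r]}, where V : W_n(A) → W_{n+1}(A) is the Verschiebung; (iv) D_{n+1}^{[r]} maps the image of Vⁱ : W_{n+1−i}(A) → W_{n+1}(A) into itself, for every 0 ≤ i ≤ n. -/
set_option linter.unusedVariables false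

section WHDnt
open Polynomial Finset
namespace WHD

variable {p : ℕ}

/-- key divisibility: for `1 ≤ s ≤ a`, `p^(1 + v_p a) ∣ choose a s * p^s`. -/
lemma choose_mul_pow_dvd (hp : p.Prime) {a s : ℕ} (hs1 : 1 ≤ s) (hsa : s ≤ a) :
    p ^ (1 + a.factorization p) ∣ a.choose s * p ^ s := by
  have ha : a ≠ 0 := by omega
  have hs0 : s ≠ 0 := by omega
  have hC : a.choose s ≠ 0 := (Nat.choose_pos hsa).ne'
  set v := a.factorization p with hv
  set vC := (a.choose s).factorization p with hvC
  set vs := s.factorization p with hvs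
  -- `a * choose (a-1) (s-1) = choose a s * s`
  have hid : a.choose s * s = a * (a-1).choose (s-1) := by
    have := Nat.add_one_mul_choose_eq (a - 1) (s - 1)
    have h1 : a - 1 + 1 = a := by omega
    have h2 : s - 1 + 1 = s := by omega
    rw [h1, h2] at this
    omega
  -- p^v ∣ choose a s * s
  have hdvd : p ^ v ∣ a.choose s * s := hid ▸ Dvd.dvd.mul_right (Nat.ordProj_dvd a p) _
  have hle : v ≤ vC + vs := by
    have := (Nat.Prime.pow_dvd_iff_le_factorization hp (Nat.mul_ne_zero hC hs0)).mp hdvd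
    rwa [Nat.factorization_mul hC hs0, Finsupp.add_apply] at this
  have hvss : vs + 1 ≤ s := by
    have h1 : p ^ vs ∣ s := Nat.ordProj_dvd s p
    have h2 : p ^ vs ≤ s := Nat.le_of_dvd (by omega) h1
    have h3 : vs < p ^ vs := Nat.lt_pow_self (n := vs) hp.one_lt
    omega
  have : p ^ (1 + v) ∣ p ^ vC * p ^ s := by
    rw [← pow_add]
    exact pow_dvd_pow p (by omega)
  exact this.trans (mul_dvd_mul (Nat.ordProj_dvd _ p) dvd_rfl)

/-- `(1+X)^p = 1 + X^p + p*u` over `ℤ`. -/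
lemma one_add_X_pow_prime (hp : p.Prime) :
    ∃ u : ℤ[X], (1 + X) ^ p = 1 + X ^ p + (p : ℤ[X]) * u := by
  have : (C (p : ℤ)) ∣ (1 + X) ^ p - 1 - X ^ p := by
    rw [Polynomial.C_dvd_iff_dvd_coeff]
    intro n
    simp only [Polynomial.coeff_sub, add_comm (1 : ℤ[X]) X, Polynomial.coeff_X_add_one_pow,
      Polynomial.coeff_one, Polynomial.coeff_X_pow]
    rcases eq_or_ne n 0 with rfl | hn0
    · rw [if_pos rfl, if_neg hp.pos.ne, Nat.choose_zero_right]
      simp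
    rcases eq_or_ne n p with rfl | hnp
    · rw [if_neg hn0, if_pos rfl, Nat.choose_self]
      simp
    rw [if_neg hn0, if_neg hnp, sub_zero, sub_zero]
    rcases lt_or_ge n p with hlt | hge
    · exact Int.natCast_dvd_natCast.mpr (Nat.Prime.dvd_choose_self hp hn0 hlt)
    · rw [Nat.choose_eq_zero_of_lt (by omega)]
      simp
  obtain ⟨u, hu⟩ := this
  exact ⟨u, by rw [← Polynomial.C_eq_natCast, ← hu]; ring⟩

end WHD

namespace WHD

/-- The key binomial congruence: `C(pa, r) ≡ [p∣r]·C(a, r/p)  mod p^(1+v_p(a))`. -/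
lemma choose_p_mul {p : ℕ} (hp : p.Prime) (a r : ℕ) :
    ∃ z : ℤ, ((p * a).choose r : ℤ) =
      (if p ∣ r then ((a.choose (r / p)) : ℤ) else 0) + (p : ℤ) ^ (1 + a.factorization p) * z := by
  obtain ⟨u, hu⟩ := one_add_X_pow_prime hp
  have hA : ((1 : ℤ[X]) + X) ^ (p * a) =
      ∑ k ∈ Finset.range (a + 1),
        ((1 : ℤ[X]) + X ^ p) ^ k * ((p : ℤ[X]) * u) ^ (a - k) * (a.choose k : ℤ[X]) := by
    rw [pow_mul, hu]
    exact add_pow _ _ a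
  have hco := congrArg (fun f => Polynomial.coeff f r) hA
  simp only [Polynomial.finset_sum_coeff, Polynomial.coeff_one_add_X_pow] at hco
  rw [Finset.sum_range_succ, Nat.sub_self, pow_zero, mul_one, Nat.choose_self, Nat.cast_one,
    mul_one] at hco
  have hAa : (((1 : ℤ[X]) + X ^ p) ^ a).coeff r
      = (if p ∣ r then ((a.choose (r / p)) : ℤ) else 0) := by
    have h1 : ((1 : ℤ[X]) + X ^ p) ^ a = Polynomial.expand ℤ p (((1:ℤ[X]) + X) ^ a) := by
      rw [map_pow, map_add, map_one, Polynomial.expand_X]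
    rw [h1, Polynomial.coeff_expand hp.pos, Polynomial.coeff_one_add_X_pow]
  rw [hAa] at hco
  have hdvd : (p : ℤ) ^ (1 + a.factorization p) ∣
      ∑ k ∈ Finset.range a,
        (((1 : ℤ[X]) + X ^ p) ^ k * ((p : ℤ[X]) * u) ^ (a - k) * (a.choose k : ℤ[X])).coeff r := by
    refine Finset.dvd_sum fun k hk => ?_
    rw [Finset.mem_range] at hk
    have hterm : ((1 : ℤ[X]) + X ^ p) ^ k * ((p : ℤ[X]) * u) ^ (a - k) * (a.choose k : ℤ[X])
        = Polynomial.C (((a.choose k) * p ^ (a - k) : ℕ) : ℤ)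
          * (((1 : ℤ[X]) + X ^ p) ^ k * u ^ (a - k)) := by
      rw [Polynomial.C_eq_natCast]
      push_cast
      ring
    rw [hterm, Polynomial.coeff_C_mul]
    refine Dvd.dvd.mul_right ?_ _
    have : ((p : ℤ)) ^ (1 + a.factorization p) ∣ (((a.choose (a - k)) * p ^ (a - k) : ℕ) : ℤ) := by
      exact_mod_cast Int.natCast_dvd_natCast.mpr
        (choose_mul_pow_dvd hp (by omega) (by omega))
    rwa [Nat.choose_symm (le_of_lt hk)] at this
  obtain ⟨z, hz⟩ := hdvd
  refine ⟨z, ?_⟩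
  rw [hco, hz]
  ring

end WHD


end WHDnt

section WHDdv
open MvPolynomial Finset
namespace WHD

/-- capped p-adic valuation -/
def vcap (p m a : ℕ) : ℕ := if a = 0 then m else min m (a.factorization p)

lemma vcap_le (p m a : ℕ) : vcap p m a ≤ m := by
  unfold vcap; split <;> omega

lemma vcap_mono (p : ℕ) {m M : ℕ} (h : m ≤ M) (a : ℕ) : vcap p m a ≤ vcap p M a := by
  unfold vcap; split <;> omega

lemma vcap_factorization_le (p m : ℕ) {a : ℕ} (ha : a ≠ 0) :
    vcap p m a ≤ a.factorization p := by
  unfold vcap; rw [if_neg ha]; omega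

lemma min_vcap_le {p : ℕ} (hp : p.Prime) (m a b : ℕ) :
    min (vcap p m a) (vcap p m b) ≤ vcap p m (a + b) := by
  rcases eq_or_ne a 0 with rfl | ha
  · simp [vcap_le, vcap]
  rcases eq_or_ne b 0 with rfl | hb
  · simpa [vcap] using min_le_left (vcap p m a) m |>.trans (le_refl _) |>.trans
      (by simp [vcap, ha])
  have hab : a + b ≠ 0 := by omega
  have hdvd : p ^ min (a.factorization p) (b.factorization p) ∣ a + b := by
    refine dvd_add ?_ ?_
    · exact (pow_dvd_pow p (min_le_left _ _)).trans (Nat.ordProj_dvd a p)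
    · exact (pow_dvd_pow p (min_le_right _ _)).trans (Nat.ordProj_dvd b p)
  have hle : min (a.factorization p) (b.factorization p) ≤ (a + b).factorization p :=
    (Nat.Prime.pow_dvd_iff_le_factorization hp hab).mp hdvd
  unfold vcap
  rw [if_neg ha, if_neg hb, if_neg hab]
  omega

variable {p d : ℕ} {R : Type*} [CommRing R]

/-- `f` has coefficients whose `p`-divisibility compensates the `j`-exponent valuations. -/
def IsDv (p : ℕ) (j : Fin d) (m : ℕ) (f : MvPolynomial (Fin d) R) : Prop :=
  ∀ e : Fin d →₀ ℕ, (p : R) ^ (m - vcap p m (e j)) ∣ MvPolynomial.coeff e f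

lemma IsDv_zero (j : Fin d) (m : ℕ) : IsDv p j m (0 : MvPolynomial (Fin d) R) :=
  fun e => by simp

lemma IsDv_zero_level (j : Fin d) (f : MvPolynomial (Fin d) R) : IsDv p j 0 f :=
  fun e => by simp

lemma IsDv_add {j : Fin d} {m : ℕ} {f g : MvPolynomial (Fin d) R}
    (hf : IsDv p j m f) (hg : IsDv p j m g) : IsDv p j m (f + g) := fun e => by
  rw [MvPolynomial.coeff_add]; exact dvd_add (hf e) (hg e)

lemma IsDv_sum {j : Fin d} {m : ℕ} {ι : Type*} {s : Finset ι} {F : ι → MvPolynomial (Fin d) R}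
    (h : ∀ i ∈ s, IsDv p j m (F i)) : IsDv p j m (∑ i ∈ s, F i) := fun e => by
  rw [MvPolynomial.coeff_sum]; exact Finset.dvd_sum fun i hi => h i hi e

lemma IsDv_monomial {j : Fin d} {m : ℕ} {e : Fin d →₀ ℕ} {c : R}
    (hc : (p : R) ^ (m - vcap p m (e j)) ∣ c) : IsDv p j m (monomial e c) := fun E => by
  rw [MvPolynomial.coeff_monomial]
  split
  · next h => exact h ▸ hc
  · exact dvd_zero _

lemma IsDv_C (j : Fin d) (m : ℕ) (c : R) : IsDv p j m (C c : MvPolynomial (Fin d) R) := fun E => by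
  rw [MvPolynomial.coeff_C]
  split
  · next h => simp [← h, vcap, Finsupp.coe_zero]
  · exact dvd_zero _

lemma IsDv_natCast (j : Fin d) (m : ℕ) (n : ℕ) :
    IsDv p j m ((n : ℕ) : MvPolynomial (Fin d) R) := by
  rw [← map_natCast (C : R →+* MvPolynomial (Fin d) R)]
  exact IsDv_C j m _

lemma IsDv_mul (hp : p.Prime) {j : Fin d} {m : ℕ} {f g : MvPolynomial (Fin d) R}
    (hf : IsDv p j m f) (hg : IsDv p j m g) : IsDv p j m (f * g) := fun e => by
  rw [MvPolynomial.coeff_mul]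
  refine Finset.dvd_sum fun x hx => ?_
  rw [Finset.HasAntidiagonal.mem_antidiagonal] at hx
  have h1 := vcap_le p m (x.1 j)
  have h2 := vcap_le p m (x.2 j)
  have h3 := min_vcap_le hp m (x.1 j) (x.2 j)
  have h4 : e j = x.1 j + x.2 j := by rw [← hx]; simp
  have h5 : m - vcap p m (e j) ≤ (m - vcap p m (x.1 j)) + (m - vcap p m (x.2 j)) := by
    rw [h4]; omega
  calc (p : R) ^ (m - vcap p m (e j))
      ∣ (p : R) ^ ((m - vcap p m (x.1 j)) + (m - vcap p m (x.2 j))) := pow_dvd_pow _ h5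
    _ = (p : R) ^ (m - vcap p m (x.1 j)) * (p : R) ^ (m - vcap p m (x.2 j)) := pow_add _ _ _
    _ ∣ _ := mul_dvd_mul (hf x.1) (hg x.2)

lemma IsDv_one (hp : p.Prime) (j : Fin d) (m : ℕ) : IsDv p j m (1 : MvPolynomial (Fin d) R) := by
  simpa using IsDv_C (p := p) j m (1 : R)

lemma IsDv_pow (hp : p.Prime) {j : Fin d} {m : ℕ} {f : MvPolynomial (Fin d) R}
    (hf : IsDv p j m f) (k : ℕ) : IsDv p j m (f ^ k) := by
  induction k with
  | zero => simpa using IsDv_one hp j m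
  | succ k ih => rw [pow_succ]; exact IsDv_mul hp ih hf

lemma IsDv_p_mul {j : Fin d} {m : ℕ} {f : MvPolynomial (Fin d) R}
    (hf : IsDv p j m f) : IsDv p j (m + 1) ((p : MvPolynomial (Fin d) R) * f) := fun e => by
  rw [← map_natCast (C : R →+* MvPolynomial (Fin d) R), MvPolynomial.coeff_C_mul]
  have h1 := vcap_le p m (e j)
  have h2 := vcap_mono p (show m ≤ m + 1 by omega) (e j)
  have h3 : m + 1 - vcap p (m + 1) (e j) ≤ 1 + (m - vcap p m (e j)) := by omega
  calc (p : R) ^ (m + 1 - vcap p (m+1) (e j)) ∣ (p : R) ^ (1 + (m - vcap p m (e j))) :=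
        pow_dvd_pow _ h3
    _ = (p : R) * (p : R) ^ (m - vcap p m (e j)) := by rw [pow_add, pow_one]
    _ ∣ _ := mul_dvd_mul_left _ (hf e)

lemma IsDv_shift {j : Fin d} {m M : ℕ} {f : MvPolynomial (Fin d) R}
    (hf : IsDv p j m f) (h : m ≤ M) : IsDv p j M ((p : MvPolynomial (Fin d) R) ^ (M - m) * f) :=
  fun e => by
  rw [← map_natCast (C : R →+* MvPolynomial (Fin d) R), ← map_pow, MvPolynomial.coeff_C_mul]
  have h1 := vcap_le p m (e j)
  have h2 := vcap_mono p h (e j)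
  have h3 : M - vcap p M (e j) ≤ (M - m) + (m - vcap p m (e j)) := by omega
  calc (p : R) ^ (M - vcap p M (e j)) ∣ (p : R) ^ ((M - m) + (m - vcap p m (e j))) :=
        pow_dvd_pow _ h3
    _ = (p : R) ^ (M - m) * (p : R) ^ (m - vcap p m (e j)) := pow_add _ _ _
    _ ∣ _ := mul_dvd_mul_left _ (hf e)

lemma IsDv_frob (hp : p.Prime) {j : Fin d} {m : ℕ} {f : MvPolynomial (Fin d) R}
    (hf : IsDv p j m f) : IsDv p j (m + 1) (f ^ p) := by
  suffices H : ∀ s : Finset (Fin d →₀ ℕ), ∀ f : MvPolynomial (Fin d) R,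
      f.support ⊆ s → IsDv p j m f → IsDv p j (m + 1) (f ^ p) from
    H f.support f subset_rfl hf
  intro s
  induction s using Finset.induction with
  | empty =>
    intro f hsupp _
    have : f = 0 := by
      rw [← MvPolynomial.support_eq_empty]
      exact Finset.subset_empty.mp hsupp
    rw [this, zero_pow hp.pos.ne']
    exact IsDv_zero j _
  | @insert e s hes ih =>
    intro f hsupp hf
    set c := MvPolynomial.coeff e f with hc
    set t : MvPolynomial (Fin d) R := monomial e c with ht
    set g : MvPolynomial (Fin d) R := f - t with hg
    have hcoeffg : ∀ E, MvPolynomial.coeff E g = if E = e then 0 else MvPolynomial.coeff E f := by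
      intro E
      rw [hg, MvPolynomial.coeff_sub, ht, MvPolynomial.coeff_monomial]
      split
      · next h => subst h; simp [hc]
      · next h =>
        rw [if_neg (by intro hEe; exact h hEe.symm)]
        ring
    have hgsupp : g.support ⊆ s := by
      intro E hE
      rw [MvPolynomial.mem_support_iff, hcoeffg] at hE
      by_cases hEe : E = e
      · rw [if_pos hEe] at hE; exact absurd rfl hE
      · rw [if_neg hEe] at hE
        have := hsupp (MvPolynomial.mem_support_iff.mpr hE)
        rcases Finset.mem_insert.mp this with h | h
        · exact absurd h hEe
        · exact h
    have hgDv : IsDv p j m g := fun E => by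
      rw [hcoeffg]
      split
      · exact dvd_zero _
      · exact hf E
    have htDv : IsDv p j m t := IsDv_monomial (hf e)
    have hft : f = t + g := by rw [hg]; ring
    rw [hft, add_pow_prime_eq hp]
    refine IsDv_add (IsDv_add ?_ ?_) ?_
    · -- t ^ p = monomial (p • e) (c ^ p)
      rw [ht, MvPolynomial.monomial_pow]
      refine IsDv_monomial ?_
      have hsmul : (p • e) j = p * e j := by simp
      rw [hsmul]
      rcases eq_or_ne (e j) 0 with h0 | h0
      · rw [h0, Nat.mul_zero]
        simp [vcap]
      · have hpe : p * e j ≠ 0 := Nat.mul_ne_zero hp.pos.ne' h0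
        have hfac : (p * e j).factorization p = 1 + (e j).factorization p := by
          rw [Nat.factorization_mul hp.pos.ne' h0, Finsupp.add_apply,
            Nat.Prime.factorization_self hp]
        have hvc : vcap p (m + 1) (p * e j) = 1 + vcap p m (e j) := by
          unfold vcap
          rw [if_neg hpe, if_neg h0, hfac]
          omega
        rw [hvc]
        have : m + 1 - (1 + vcap p m (e j)) = m - vcap p m (e j) := by omega
        rw [this]
        exact (hf e).trans (dvd_pow_self c hp.pos.ne')
    · exact ih g hgsupp hgDv
    · rw [mul_assoc, mul_assoc]
      refine IsDv_p_mul (IsDv_mul hp htDv (IsDv_mul hp hgDv (IsDv_sum fun i hi => ?_)))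
      exact IsDv_mul hp (IsDv_mul hp (IsDv_pow hp htDv _) (IsDv_pow hp hgDv _))
        (IsDv_natCast j m _)

lemma IsDv_pow_p_pow (hp : p.Prime) (j : Fin d) (M : ℕ) (f : MvPolynomial (Fin d) R) :
    IsDv p j M (f ^ p ^ M) := by
  induction M with
  | zero => rw [pow_zero, pow_one]; exact IsDv_zero_level j f
  | succ M ih =>
    have : f ^ p ^ (M + 1) = (f ^ p ^ M) ^ p := by rw [← pow_mul, pow_succ]
    rw [this]
    exact IsDv_frob hp ih

end WHD


end WHDdv

section WHDhasse
open MvPolynomial Finset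
namespace WHD

variable {p d : ℕ} {R : Type*} [CommRing R]

lemma prod_choose_single (e : Fin d →₀ ℕ) (j : Fin d) (r : ℕ) :
    (∏ j' ∈ (Finsupp.single j r).support, (e j').choose ((Finsupp.single j r) j')) =
      (e j).choose r := by
  rcases eq_or_ne r 0 with rfl | hr
  · simp
  · rw [Finsupp.support_single_ne_zero _ hr, Finset.prod_singleton, Finsupp.single_eq_same]

lemma sub_single_lt {a E : Fin d →₀ ℕ} {j : Fin d} {r : ℕ}
    (h : a - Finsupp.single j r = E) (hne : a ≠ E + Finsupp.single j r) : a j < r := by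
  by_contra hge
  push_neg at hge
  apply hne
  ext t
  rcases eq_or_ne t j with rfl | ht
  · have := congrArg (fun F => F t) h
    simp only [Finsupp.tsub_apply, Finsupp.single_eq_same] at this
    simp only [Finsupp.add_apply, Finsupp.single_eq_same]
    omega
  · have := congrArg (fun F => F t) h
    simp only [Finsupp.tsub_apply, Finsupp.single_eq_of_ne' (Ne.symm ht)] at this
    simp only [Finsupp.add_apply, Finsupp.single_eq_of_ne' (Ne.symm ht)]
    omega

/-- coefficient formula for the single-variable Hasse derivative -/
lemma hasse_coeff (j : Fin d) (r : ℕ) (f : MvPolynomial (Fin d) R) (E : Fin d →₀ ℕ) :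
    MvPolynomial.coeff E (mvHasseDeriv (Finsupp.single j r) f) =
      (((E j + r).choose r : ℕ) : R) * MvPolynomial.coeff (E + Finsupp.single j r) f := by
  unfold mvHasseDeriv
  rw [MvPolynomial.coeff_sum]
  simp only [MvPolynomial.coeff_monomial, prod_choose_single]
  rw [Finset.sum_congr rfl
    (show ∀ e ∈ f.support, (if e - Finsupp.single j r = E then
        (((e j).choose r : ℕ) : R) * MvPolynomial.coeff e f else 0) =
      (if e = E + Finsupp.single j r then
        (((e j).choose r : ℕ) : R) * MvPolynomial.coeff e f else 0) from ?_),
    Finset.sum_ite_eq' f.support (E + Finsupp.single j r) _]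
  · split
    · next h =>
      congr 2
      simp [Finsupp.add_apply, Finsupp.single_eq_same]
    · next h =>
      rw [MvPolynomial.notMem_support_iff.mp h, mul_zero]
  · intro e _
    by_cases he : e = E + Finsupp.single j r
    · rw [if_pos he, if_pos (by rw [he]; exact add_tsub_cancel_right _ _)]
    · rw [if_neg he]
      by_cases h2 : e - Finsupp.single j r = E
      · rw [if_pos h2, Nat.choose_eq_zero_of_lt (sub_single_lt h2 he), Nat.cast_zero, zero_mul]
      · rw [if_neg h2]

lemma hasse_add (j : Fin d) (r : ℕ) (f g : MvPolynomial (Fin d) R) :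
    mvHasseDeriv (Finsupp.single j r) (f + g) =
      mvHasseDeriv (Finsupp.single j r) f + mvHasseDeriv (Finsupp.single j r) g := by
  apply MvPolynomial.ext
  intro E
  simp [hasse_coeff, mul_add]

lemma hasse_zero (j : Fin d) (r : ℕ) :
    mvHasseDeriv (Finsupp.single j r) (0 : MvPolynomial (Fin d) R) = 0 := by
  apply MvPolynomial.ext
  intro E
  simp [hasse_coeff]

lemma hasse_sum (j : Fin d) (r : ℕ) {ι : Type*} (s : Finset ι)
    (F : ι → MvPolynomial (Fin d) R) :
    mvHasseDeriv (Finsupp.single j r) (∑ i ∈ s, F i) =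
      ∑ i ∈ s, mvHasseDeriv (Finsupp.single j r) (F i) := by
  induction s using Finset.cons_induction with
  | empty => simp [hasse_zero]
  | cons i s his ih => rw [Finset.sum_cons, Finset.sum_cons, hasse_add, ih]

lemma hasse_monomial (j : Fin d) (r : ℕ) (a : Fin d →₀ ℕ) (c : R) :
    mvHasseDeriv (Finsupp.single j r) (monomial a c) =
      monomial (a - Finsupp.single j r) (((a j).choose r : ℕ) * c) := by
  apply MvPolynomial.ext
  intro E
  rw [hasse_coeff, MvPolynomial.coeff_monomial, MvPolynomial.coeff_monomial]
  by_cases h : a = E + Finsupp.single j r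
  · rw [if_pos h, if_pos (by rw [h]; exact add_tsub_cancel_right _ _)]
    subst h
    congr 2
    simp [Finsupp.add_apply, Finsupp.single_eq_same]
  · rw [if_neg h]
    by_cases h2 : a - Finsupp.single j r = E
    · rw [if_pos h2, Nat.choose_eq_zero_of_lt (sub_single_lt h2 h), Nat.cast_zero, zero_mul,
        mul_zero]
    · rw [if_neg h2, mul_zero]

lemma hasse_map {S : Type*} [CommRing S] (ρ : R →+* S) (j : Fin d) (r : ℕ)
    (f : MvPolynomial (Fin d) R) :
    mvHasseDeriv (Finsupp.single j r) (MvPolynomial.map ρ f) =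
      MvPolynomial.map ρ (mvHasseDeriv (Finsupp.single j r) f) := by
  apply MvPolynomial.ext
  intro E
  rw [hasse_coeff, MvPolynomial.coeff_map, MvPolynomial.coeff_map, hasse_coeff, map_mul,
    map_natCast]

lemma hasse_natCast_mul (j : Fin d) (r a : ℕ) (f : MvPolynomial (Fin d) R) :
    mvHasseDeriv (Finsupp.single j r) ((a : MvPolynomial (Fin d) R) * f) =
      (a : MvPolynomial (Fin d) R) * mvHasseDeriv (Finsupp.single j r) f := by
  apply MvPolynomial.ext
  intro E
  rw [← map_natCast (C : R →+* MvPolynomial (Fin d) R), hasse_coeff, MvPolynomial.coeff_C_mul,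
    MvPolynomial.coeff_C_mul, hasse_coeff]
  ring

lemma expand_monomial' (hp : p.Prime) (a : Fin d →₀ ℕ) (c : R) :
    MvPolynomial.expand p (monomial a c) = monomial (p • a) c := by
  rw [MvPolynomial.expand_monomial, MvPolynomial.monomial_eq]

end WHD

namespace WHD

variable {p d : ℕ} {R : Type*} [CommRing R]

lemma star_monomial (hp : p.Prime) (ψ : R →+* R) {m : ℕ} (hp0 : (p : R) ^ (m + 1) = 0)
    (j : Fin d) (r : ℕ) (e : Fin d →₀ ℕ) (c : R)
    (hc : (p : R) ^ (m - vcap p m (e j)) ∣ c) :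
    mvHasseDeriv (Finsupp.single j r)
        (MvPolynomial.expand p (MvPolynomial.map ψ (monomial e c))) =
      if p ∣ r then
        MvPolynomial.expand p (MvPolynomial.map ψ
          (mvHasseDeriv (Finsupp.single j (r / p)) (monomial e c)))
      else 0 := by
  rw [MvPolynomial.map_monomial, expand_monomial' hp, hasse_monomial, hasse_monomial,
    MvPolynomial.map_monomial, expand_monomial' hp]
  have hsmulj : (p • e) j = p * e j := by simp
  rcases eq_or_ne (e j) 0 with h0 | h0
  · -- e j = 0
    rcases eq_or_ne r 0 with rfl | hr
    · rw [if_pos (dvd_zero p)]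
      simp [h0, hsmulj]
    · split
      · next hpr =>
        have hrp : 0 < r / p := Nat.div_pos (Nat.le_of_dvd (by omega) hpr) hp.pos
        rw [hsmulj, h0, Nat.mul_zero, Nat.choose_eq_zero_of_lt (by omega),
          Nat.choose_eq_zero_of_lt hrp]
        simp
      · rw [hsmulj, h0, Nat.mul_zero, Nat.choose_eq_zero_of_lt (by omega)]
        simp
  · -- e j ≠ 0
    set a := e j with ha
    set v := a.factorization p with hv
    obtain ⟨z, hz⟩ := choose_p_mul hp a r
    have hzR : (((p * a).choose r : ℕ) : R) =
        (if p ∣ r then ((a.choose (r / p) : ℕ) : R) else 0) + (p : R) ^ (1 + v) * (z : R) := by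
      have := congrArg (fun t : ℤ => (t : R)) hz
      push_cast at this
      split at this <;> split <;> first | assumption | simp_all
    obtain ⟨c', hc'⟩ := hc
    have hkill : (p : R) ^ (1 + v) * ψ c = 0 := by
      have hvv : vcap p m a ≤ v := vcap_factorization_le p m h0
      have hvm : vcap p m a ≤ m := vcap_le p m a
      rw [hc', map_mul, map_pow, map_natCast, ← mul_assoc, ← pow_add]
      have harith : (1 + v) + (m - vcap p m a) = (m + 1) + (v - vcap p m a) := by omega
      rw [harith, pow_add, hp0, zero_mul, zero_mul]
    split
    · next hpr =>
      have hexp : p • e - Finsupp.single j r = p • (e - Finsupp.single j (r / p)) := by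
        ext t
        simp only [Finsupp.tsub_apply, Finsupp.smul_apply, smul_eq_mul]
        rcases eq_or_ne t j with rfl | ht
        · simp only [Finsupp.single_eq_same]
          rw [Nat.mul_sub, Nat.mul_div_cancel' hpr]
        · simp [Finsupp.single_eq_of_ne' (Ne.symm ht)]
      rw [hexp, hsmulj]
      congr 1
      rw [map_mul, map_natCast]
      calc (((p * a).choose r : ℕ) : R) * ψ c
          = (((a.choose (r / p) : ℕ) : R) + (p : R) ^ (1 + v) * (z : R)) * ψ c := by
            rw [hzR, if_pos hpr]
        _ = ((a.choose (r / p) : ℕ) : R) * ψ c + (z : R) * ((p : R) ^ (1 + v) * ψ c) := by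
            ring
        _ = ((a.choose (r / p) : ℕ) : R) * ψ c := by rw [hkill, mul_zero, add_zero]
    · next hpr =>
      have : (((p * a).choose r : ℕ) : R) * ψ c = 0 := by
        calc (((p * a).choose r : ℕ) : R) * ψ c
            = (0 + (p : R) ^ (1 + v) * (z : R)) * ψ c := by rw [hzR, if_neg hpr]
          _ = (z : R) * ((p : R) ^ (1 + v) * ψ c) := by ring
          _ = 0 := by rw [hkill, mul_zero]
      rw [hsmulj, this, MvPolynomial.monomial_zero]

lemma star (hp : p.Prime) (ψ : R →+* R) {m : ℕ} (hp0 : (p : R) ^ (m + 1) = 0)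
    (j : Fin d) (r : ℕ) (w : MvPolynomial (Fin d) R) (hw : IsDv p j m w) :
    mvHasseDeriv (Finsupp.single j r) (MvPolynomial.expand p (MvPolynomial.map ψ w)) =
      if p ∣ r then
        MvPolynomial.expand p (MvPolynomial.map ψ
          (mvHasseDeriv (Finsupp.single j (r / p)) w))
      else 0 := by
  conv_lhs => rw [← MvPolynomial.support_sum_monomial_coeff w]
  rw [map_sum, map_sum, hasse_sum]
  have hterm : ∀ e ∈ w.support,
      mvHasseDeriv (Finsupp.single j r)
        (MvPolynomial.expand p (MvPolynomial.map ψ (monomial e (MvPolynomial.coeff e w)))) =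
      if p ∣ r then
        MvPolynomial.expand p (MvPolynomial.map ψ
          (mvHasseDeriv (Finsupp.single j (r / p)) (monomial e (MvPolynomial.coeff e w))))
      else 0 := fun e _ => star_monomial hp ψ hp0 j r e _ (hw e)
  rw [Finset.sum_congr rfl hterm]
  split
  · next =>
    conv_rhs => rw [← MvPolynomial.support_sum_monomial_coeff w]
    rw [hasse_sum, map_sum, map_sum]
  · next => exact Finset.sum_const_zero

end WHD


end WHDhasse

section WHDwitt
namespace WHD


variable {p : ℕ} [hp : Fact p.Prime]

lemma truncate_out' {R : Type*} [CommRing R] {m : ℕ} (c : TruncatedWittVector p m R) :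
    WittVector.truncate m c.out = c := by
  apply TruncatedWittVector.ext
  intro i
  rw [WittVector.coeff_truncate, TruncatedWittVector.coeff_out]

lemma twMap_truncate {R S : Type*} [CommRing R] [CommRing S] (m : ℕ) (f : R →+* S)
    (x : WittVector p R) :
    twMap p m f (WittVector.truncate m x) = WittVector.truncate m (WittVector.map f x) :=
  RingHom.liftOfRightInverse_comp_apply _ _ _ _ x

lemma twMap_coeff {R S : Type*} [CommRing R] [CommRing S] {m : ℕ} (f : R →+* S)
    (y : TruncatedWittVector p m R) (i : Fin m) :
    (twMap p m f y).coeff i = f (y.coeff i) := by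
  conv_lhs => rw [← truncate_out' y, twMap_truncate]
  rw [WittVector.coeff_truncate, WittVector.map_coeff, TruncatedWittVector.coeff_out]

lemma twMap_injective {R S : Type*} [CommRing R] [CommRing S] {m : ℕ} {f : R →+* S}
    (hf : Function.Injective f) : Function.Injective (twMap p m f) := by
  intro x y h
  apply TruncatedWittVector.ext
  intro i
  apply hf
  rw [← twMap_coeff f x i, ← twMap_coeff f y i, h]

/-- `p^m = 0` in `W_m(K)` for `K` of characteristic `p`. -/
lemma p_pow_zero (K : Type*) [CommRing K] [CharP K p] (m : ℕ) :
    ((p : TruncatedWittVector p m K)) ^ m = 0 := by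
  have h1 : ((p : TruncatedWittVector p m (ZMod p))) ^ m = 0 := by
    have : ((p : TruncatedWittVector p m (ZMod p))) ^ m =
        (TruncatedWittVector.zmodEquivTrunc p m) ((p : ZMod (p ^ m)) ^ m) := by
      rw [map_pow, map_natCast]
    rw [this, ← Nat.cast_pow, ZMod.natCast_self, map_zero]
  have h2 := congrArg (twMap p m (ZMod.castHom (dvd_refl p) K)) h1
  rwa [map_pow, map_natCast, map_zero] at h2

lemma p_pow_ne_zero (K : Type*) [Field K] [CharP K p] {m l : ℕ} (hl : l < m) :
    ((p : TruncatedWittVector p m K)) ^ l ≠ 0 := by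
  have h1 : ((p : TruncatedWittVector p m (ZMod p))) ^ l ≠ 0 := by
    have heq : ((p : TruncatedWittVector p m (ZMod p))) ^ l =
        (TruncatedWittVector.zmodEquivTrunc p m) (((p ^ l : ℕ) : ZMod (p ^ m))) := by
      rw [Nat.cast_pow, map_pow, map_natCast]
    rw [heq]
    intro h
    rw [← map_zero (TruncatedWittVector.zmodEquivTrunc p m)] at h
    have := (TruncatedWittVector.zmodEquivTrunc p m).injective h
    rw [ZMod.natCast_eq_zero_iff] at this
    have hlt : p ^ l < p ^ m := Nat.pow_lt_pow_right hp.out.one_lt hl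
    have := Nat.le_of_dvd ((Nat.pow_pos (n := l) hp.out.pos)) this
    omega
  intro h
  apply h1
  apply twMap_injective (f := ZMod.castHom (dvd_refl p) K) (ZMod.castHom (dvd_refl p) K).injective
  rw [map_pow, map_natCast, map_zero, h]

lemma iterate_verschiebung_coeff_lt {R : Type*} [CommRing R] (x : WittVector p R) {s i : ℕ}
    (h : s < i) : (WittVector.verschiebung^[i] x).coeff s = 0 := by
  induction i generalizing s with
  | zero => omega
  | succ i ih =>
    rw [Function.iterate_succ_apply']
    cases s with
    | zero => exact WittVector.verschiebung_coeff_zero _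
    | succ s => rw [WittVector.verschiebung_coeff_succ]; exact ih (by omega)

lemma iterate_verschiebung_frobenius (K : Type*) [CommRing K] [CharP K p] (l : ℕ)
    (w : WittVector p K) :
    WittVector.verschiebung^[l] (WittVector.frobenius^[l] w) = w * (p : WittVector p K) ^ l := by
  induction l generalizing w with
  | zero => simp
  | succ l ih =>
    rw [Function.iterate_succ_apply', Function.iterate_succ_apply]
    rw [ih (WittVector.frobenius w)]
    have : (WittVector.frobenius w : WittVector p K) * (p : WittVector p K) ^ l =
        WittVector.frobenius (w * (p : WittVector p K) ^ l) := by
      rw [map_mul, map_pow, map_natCast]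
    rw [this, WittVector.verschiebung_frobenius, pow_succ]
    ring

/-- if the first `l` coefficients vanish then `c` is divisible by `p^l`. -/
lemma low_coeff_p_pow_dvd (K : Type*) [CommRing K] [CharP K p] [PerfectRing K p] {m : ℕ}
    (c : TruncatedWittVector p m K) (l : ℕ)
    (hc : ∀ s : Fin m, (s : ℕ) < l → c.coeff s = 0) :
    ∃ c', c = (p : TruncatedWittVector p m K) ^ l * c' := by
  set x := c.out with hx
  have hxc : ∀ s, s < l → x.coeff s = 0 := by
    intro s hs
    by_cases hsm : s < m
    · rw [hx]
      have := TruncatedWittVector.coeff_out c ⟨s, hsm⟩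
      rw [this]
      exact hc ⟨s, hsm⟩ hs
    · show (if h : s < m then c.coeff ⟨s, h⟩ else 0) = 0
      rw [dif_neg hsm]
  set y := WittVector.mk p (fun s => x.coeff (s + l)) with hy
  have hVy : WittVector.verschiebung^[l] y = x := by
    apply WittVector.ext
    intro s
    rcases lt_or_ge s l with hs | hs
    · rw [iterate_verschiebung_coeff_lt _ hs, hxc s hs]
    · have hrw : s = (s - l) + l := by omega
      rw [hrw, WittVector.iterate_verschiebung_coeff]
      rw [hy, WittVector.coeff_mk]
  set z := (fun w => (WittVector.frobeniusEquiv p K).symm w)^[l] y with hz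
  have hLI : Function.LeftInverse (WittVector.frobenius (p := p) (R := K))
      ((WittVector.frobeniusEquiv p K).symm) := fun w => by
    rw [← WittVector.frobeniusEquiv_apply]
    exact (WittVector.frobeniusEquiv p K).apply_symm_apply w
  have hFz : WittVector.frobenius^[l] z = y := hLI.iterate l y
  refine ⟨WittVector.truncate m z, ?_⟩
  calc c = WittVector.truncate m x := (truncate_out' c).symm
    _ = WittVector.truncate m (z * (p : WittVector p K) ^ l) := by
        rw [← hVy, ← hFz, iterate_verschiebung_frobenius]
    _ = (p : TruncatedWittVector p m K) ^ l * WittVector.truncate m z := by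
        rw [map_mul, map_pow, map_natCast, mul_comm]

end WHD

namespace WHD

variable {p : ℕ} [hp : Fact p.Prime]

/-- in `W_m(K)`, `K` a field of char `p`: if `p^l * c = 0` with `l < m`, then `c₀ = 0`. -/
lemma ann_p_pow {K : Type*} [Field K] [CharP K p] {m l : ℕ} (hl : l < m)
    (c : TruncatedWittVector p m K) (h : (p : TruncatedWittVector p m K) ^ l * c = 0)
    (i0 : Fin m) (hi0 : (i0 : ℕ) = 0) : c.coeff i0 = 0 := by
  by_contra h0
  have hunit : IsUnit c.out := by
    apply WittVector.isUnit_of_coeff_zero_ne_zero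
    have : c.out.coeff i0 = c.coeff i0 := TruncatedWittVector.coeff_out c i0
    rw [hi0] at this
    rw [this]
    exact h0
  have hcunit : IsUnit c := by
    have := hunit.map (WittVector.truncate m)
    rwa [truncate_out'] at this
  obtain ⟨u, hu⟩ := hcunit
  have hpl : (p : TruncatedWittVector p m K) ^ l = 0 := by
    have h2 : ((p : TruncatedWittVector p m K) ^ l * c) * ↑u⁻¹ = 0 := by rw [h, zero_mul]
    rwa [← hu, mul_assoc, u.mul_inv, mul_one] at h2
  exact p_pow_ne_zero K hl hpl

/-- extract a `p`-power from a polynomial all of whose coefficients are divisible. -/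
lemma poly_p_pow_dvd {d : ℕ} {S : Type*} [CommRing S] (f : MvPolynomial (Fin d) S) (l : ℕ)
    (hf : ∀ e, ∃ c', MvPolynomial.coeff e f = (p : S) ^ l * c') :
    ∃ g, f = (p : MvPolynomial (Fin d) S) ^ l * g := by
  have : MvPolynomial.C ((p : S) ^ l) ∣ f := by
    rw [MvPolynomial.C_dvd_iff_dvd_coeff]
    intro e
    obtain ⟨c', hc'⟩ := hf e
    exact ⟨c', hc'⟩
  obtain ⟨g, hg⟩ := this
  refine ⟨g, ?_⟩
  rwa [map_pow, map_natCast] at hg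

/-- `expand p` is injective (on MvPolynomial over any nontrivial-exponent setting). -/
lemma expand_injective {d : ℕ} {S : Type*} [CommRing S] :
    Function.Injective (MvPolynomial.expand (R := S) (σ := Fin d) p) := by
  intro f g h
  apply MvPolynomial.ext
  intro e
  have hco : ∀ q : MvPolynomial (Fin d) S, ∀ E,
      MvPolynomial.coeff (p • E) (MvPolynomial.expand (R := S) (σ := Fin d) p q) =
        MvPolynomial.coeff E q := by
    intro q E
    conv_lhs => rw [← MvPolynomial.support_sum_monomial_coeff q]
    rw [map_sum, MvPolynomial.coeff_sum]
    have hterm : ∀ e' ∈ q.support,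
        MvPolynomial.coeff (p • E)
          (MvPolynomial.expand (R := S) p (MvPolynomial.monomial e' (MvPolynomial.coeff e' q))) =
        if e' = E then MvPolynomial.coeff e' q else 0 := by
      intro e' _
      rw [expand_monomial' hp.out, MvPolynomial.coeff_monomial]
      congr 1
      simp only [eq_iff_iff]
      constructor
      · intro hsm
        ext t
        have := congrArg (fun F => F t) hsm
        simp only [Finsupp.smul_apply, smul_eq_mul] at this
        exact Nat.eq_of_mul_eq_mul_left hp.out.pos this
      · intro h'; rw [h']
    rw [Finset.sum_congr rfl hterm, Finset.sum_ite_eq' q.support E]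
    split
    · rfl
    · next hns => rw [MvPolynomial.notMem_support_iff.mp hns]
  rw [← hco f e, ← hco g e, h]

/-- `expand p (map (frobenius) f) = f ^ p` in characteristic `p`. -/
lemma mv_expand_char {d : ℕ} {K : Type*} [CommRing K] [CharP K p]
    (f : MvPolynomial (Fin d) K) :
    MvPolynomial.expand p (MvPolynomial.map (frobenius K p) f) = f ^ p := by
  conv_lhs => rw [← MvPolynomial.support_sum_monomial_coeff f]
  conv_rhs => rw [← MvPolynomial.support_sum_monomial_coeff f]
  rw [map_sum, map_sum, sum_pow_char]
  refine Finset.sum_congr rfl fun e _ => ?_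
  rw [MvPolynomial.map_monomial, expand_monomial' hp.out, MvPolynomial.monomial_pow,
    frobenius_def]

end WHD


end WHDwitt

/-- With `A = k[t₁,…,t_d]`, `A_m = W_m(k)[t₁,…,t_d]` for `m ∈ {n, n+1}`
(`n ≥ 1`), the canonical injective ring homomorphisms `w̃_{m-1} : W_m(A) → A_m`, and maps
`D_m^{[s]}` (`s ∈ {r, r/p}`) restricting the Hasse derivatives `∂_j^{[s]}` along `w̃_{m-1}`
(where `∂_j^{[r/p]} := 0` if `p ∤ r`), one has:
(i) `D_n^{[r/p]} ∘ R = R ∘ D_{n+1}^{[r]}` for the restriction `R : W_{n+1}(A) → W_n(A)`;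
(ii) `D_{n+1}^{[r]} ∘ Φ_A = Φ_A ∘ D_{n+1}^{[r/p]}` for the Witt-functorial Frobenius
`Φ_A = W_{n+1}(x ↦ x^p)`;
(iii) `D_{n+1}^{[r]} ∘ V = V ∘ D_n^{[r]}` for the Verschiebung `V : W_n(A) → W_{n+1}(A)`;
(iv) `D_{n+1}^{[r]}` maps the image of `Vⁱ : W_{n+1-i}(A) → W_{n+1}(A)` into itself for
`0 ≤ i ≤ n`. -/
theorem witt_hasse_deriv_relations (p : ℕ) [Fact p.Prime]
    (k : Type*) [Field k] [CharP k p] [PerfectRing k p]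
    (d n : ℕ) (hd : 1 ≤ d) (hn : 1 ≤ n)
    (res₁ : TruncatedWittVector p (n + 1) k →+* k)
    (hres₁ : ∀ c : TruncatedWittVector p (n + 1) k, res₁ c = c.coeff 0)
    (res₀ : TruncatedWittVector p n k →+* k)
    (hres₀ : ∀ c : TruncatedWittVector p n k, res₀ c = c.coeff ⟨0, hn⟩)
    (φA : MvPolynomial (Fin d) k →+* MvPolynomial (Fin d) k)
    (hφA : ∀ x, φA x = x ^ p)
    -- the canonical injective ring homomorphisms `w̃_n` and `w̃_{n-1}`
    (wtN : TruncatedWittVector p (n + 1) (MvPolynomial (Fin d) k) →+*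
      MvPolynomial (Fin d) (TruncatedWittVector p (n + 1) k))
    (hwtNinj : Function.Injective wtN)
    (hwtN : ∀ (x : TruncatedWittVector p (n + 1) (MvPolynomial (Fin d) k))
        (g : Fin (n + 1) → MvPolynomial (Fin d) (TruncatedWittVector p (n + 1) k)),
      (∀ i, MvPolynomial.map res₁ (g i) = x.coeff i) →
      wtN x = ∑ i : Fin (n + 1),
        (p : MvPolynomial (Fin d) (TruncatedWittVector p (n + 1) k)) ^ (i : ℕ)
          * g i ^ p ^ (n - (i : ℕ)))
    (wtN' : TruncatedWittVector p n (MvPolynomial (Fin d) k) →+*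
      MvPolynomial (Fin d) (TruncatedWittVector p n k))
    (hwtN'inj : Function.Injective wtN')
    (hwtN' : ∀ (x : TruncatedWittVector p n (MvPolynomial (Fin d) k))
        (g : Fin n → MvPolynomial (Fin d) (TruncatedWittVector p n k)),
      (∀ i, MvPolynomial.map res₀ (g i) = x.coeff i) →
      wtN' x = ∑ i : Fin n,
        (p : MvPolynomial (Fin d) (TruncatedWittVector p n k)) ^ (i : ℕ)
          * g i ^ p ^ (n - 1 - (i : ℕ)))
    (j : Fin d) (r : ℕ)
    -- the four restricted operators
    (DN_r DN_rp : TruncatedWittVector p (n + 1) (MvPolynomial (Fin d) k) →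
      TruncatedWittVector p (n + 1) (MvPolynomial (Fin d) k))
    (Dn_r Dn_rp : TruncatedWittVector p n (MvPolynomial (Fin d) k) →
      TruncatedWittVector p n (MvPolynomial (Fin d) k))
    (hDN_r : ∀ x, wtN (DN_r x) = mvHasseDeriv (Finsupp.single j r) (wtN x))
    (hDN_rp : ∀ x, wtN (DN_rp x) =
      if p ∣ r then mvHasseDeriv (Finsupp.single j (r / p)) (wtN x) else 0)
    (hDn_r : ∀ x, wtN' (Dn_r x) = mvHasseDeriv (Finsupp.single j r) (wtN' x))
    (hDn_rp : ∀ x, wtN' (Dn_rp x) =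
      if p ∣ r then mvHasseDeriv (Finsupp.single j (r / p)) (wtN' x) else 0) :
    -- (i) compatibility with the restriction `R`
    (∀ x : TruncatedWittVector p (n + 1) (MvPolynomial (Fin d) k),
      Dn_rp (TruncatedWittVector.truncate (Nat.le_succ n) x) =
        TruncatedWittVector.truncate (Nat.le_succ n) (DN_r x)) ∧
    -- (ii) compatibility with the Frobenius `Φ_A`
    (∀ x : TruncatedWittVector p (n + 1) (MvPolynomial (Fin d) k),
      DN_r (twMap p (n + 1) φA x) = twMap p (n + 1) φA (DN_rp x)) ∧
    -- (iii) compatibility with the Verschiebung `V`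
    (∀ x : TruncatedWittVector p n (MvPolynomial (Fin d) k),
      DN_r (vIter p (n + 1) 1 x) = vIter p (n + 1) 1 (Dn_r x)) ∧
    -- (iv) `D_{n+1}^{[r]}` preserves the image of `Vⁱ`
    (∀ i ≤ n, ∀ z : TruncatedWittVector p (n + 1 - i) (MvPolynomial (Fin d) k),
      ∃ z' : TruncatedWittVector p (n + 1 - i) (MvPolynomial (Fin d) k),
        DN_r (vIter p (n + 1) i z) = vIter p (n + 1) i z') := by
  classical
  have hp' : p.Prime := Fact.out
  -- surjectivity of res₁ and a choice of coefficient lifts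
  have hres₁surj : Function.Surjective res₁ := by
    intro a
    refine ⟨TruncatedWittVector.mk p (fun i => if (i : ℕ) = 0 then a else 0), ?_⟩
    rw [hres₁, TruncatedWittVector.coeff_mk]
    simp
  have hliftex : ∀ a : MvPolynomial (Fin d) k,
      ∃ g : MvPolynomial (Fin d) (TruncatedWittVector p (n + 1) k),
        MvPolynomial.map res₁ g = a :=
    fun a => MvPolynomial.map_surjective res₁ hres₁surj a
  choose liftN hliftN using hliftex
  -- basic p-power vanishing
  have hSzero : ((p : TruncatedWittVector p (n + 1) k)) ^ (n + 1) = 0 := WHD.p_pow_zero k (n + 1)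
  have hS'zero : ((p : TruncatedWittVector p n k)) ^ n = 0 := WHD.p_pow_zero k n
  have hcoeffmul : ∀ (l : ℕ) (F : MvPolynomial (Fin d) (TruncatedWittVector p (n + 1) k)) (E),
      MvPolynomial.coeff E (((p : MvPolynomial (Fin d) (TruncatedWittVector p (n + 1) k))) ^ l * F)
        = ((p : TruncatedWittVector p (n + 1) k)) ^ l * MvPolynomial.coeff E F := by
    intro l F E
    rw [← map_natCast (MvPolynomial.C :
      TruncatedWittVector p (n + 1) k →+* MvPolynomial (Fin d) (TruncatedWittVector p (n + 1) k)) p,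
      ← map_pow, MvPolynomial.coeff_C_mul]
  have hANp : ((p : MvPolynomial (Fin d) (TruncatedWittVector p (n + 1) k))) ^ (n + 1) = 0 := by
    rw [← map_natCast (MvPolynomial.C :
      TruncatedWittVector p (n + 1) k →+* MvPolynomial (Fin d) (TruncatedWittVector p (n + 1) k)) p,
      ← map_pow, hSzero, map_zero]
  have hAnp : ((p : MvPolynomial (Fin d) (TruncatedWittVector p n k))) ^ n = 0 := by
    rw [← map_natCast (MvPolynomial.C :
      TruncatedWittVector p n k →+* MvPolynomial (Fin d) (TruncatedWittVector p n k)) p,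
      ← map_pow, hS'zero, map_zero]
  have hAnp' : ((p : MvPolynomial (Fin d) (TruncatedWittVector p n k))) ^ ((n - 1) + 1) = 0 := by
    rw [show n - 1 + 1 = n by omega]
    exact hAnp
  -- canonical formula for wtN
  have hwtN_lift : ∀ x : TruncatedWittVector p (n + 1) (MvPolynomial (Fin d) k),
      wtN x = ∑ i : Fin (n + 1),
        (p : MvPolynomial (Fin d) (TruncatedWittVector p (n + 1) k)) ^ (i : ℕ)
          * liftN (x.coeff i) ^ p ^ (n - (i : ℕ)) :=
    fun x => hwtN x _ (fun i => hliftN _)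
  -- compatibility of residue maps: res₀ ∘ ρ = res₁
  have hcomp0 : res₀.comp (TruncatedWittVector.truncate (Nat.le_succ n)) = res₁ := by
    refine RingHom.ext fun c => ?_
    rw [RingHom.comp_apply, hres₀, hres₁, TruncatedWittVector.coeff_truncate]
    rfl
  have hliftn : ∀ a : MvPolynomial (Fin d) k,
      MvPolynomial.map res₀
        (MvPolynomial.map (TruncatedWittVector.truncate (Nat.le_succ n)) (liftN a)) = a := by
    intro a
    rw [MvPolynomial.map_map, hcomp0, hliftN]
  have hwtN'_lift : ∀ y : TruncatedWittVector p n (MvPolynomial (Fin d) k),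
      wtN' y = ∑ i : Fin n,
        (p : MvPolynomial (Fin d) (TruncatedWittVector p n k)) ^ (i : ℕ)
          * (MvPolynomial.map (TruncatedWittVector.truncate (Nat.le_succ n))
              (liftN (y.coeff i))) ^ p ^ (n - 1 - (i : ℕ)) :=
    fun y => hwtN' y _ (fun i => hliftn _)
  -- IsDv of the images
  have hDvN : ∀ x : TruncatedWittVector p (n + 1) (MvPolynomial (Fin d) k),
      WHD.IsDv p j n (wtN x) := by
    intro x
    rw [hwtN_lift x]
    refine WHD.IsDv_sum fun i _ => ?_
    have h1 := WHD.IsDv_pow_p_pow (R := TruncatedWittVector p (n + 1) k) hp' j (n - (i : ℕ))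
      (liftN (x.coeff i))
    have h2 := WHD.IsDv_shift h1 (show n - (i : ℕ) ≤ n by omega)
    rwa [show n - (n - (i : ℕ)) = (i : ℕ) from by omega] at h2
  have hDvn : ∀ y : TruncatedWittVector p n (MvPolynomial (Fin d) k),
      WHD.IsDv p j (n - 1) (wtN' y) := by
    intro y
    rw [hwtN'_lift y]
    refine WHD.IsDv_sum fun i _ => ?_
    have h1 := WHD.IsDv_pow_p_pow (R := TruncatedWittVector p n k) hp' j (n - 1 - (i : ℕ))
      (MvPolynomial.map (TruncatedWittVector.truncate (Nat.le_succ n)) (liftN (y.coeff i)))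
    have h2 := WHD.IsDv_shift h1 (show n - 1 - (i : ℕ) ≤ n - 1 by omega)
    rwa [show n - 1 - (n - 1 - (i : ℕ)) = (i : ℕ) from by omega] at h2
  -- [P-B] Frobenius compatibility at level n+1
  have hcompF : res₁.comp (twMap p (n + 1) (frobenius k p)) = (frobenius k p).comp res₁ := by
    refine RingHom.ext fun c => ?_
    rw [RingHom.comp_apply, RingHom.comp_apply, hres₁, hres₁, WHD.twMap_coeff]
  have hPB : ∀ x : TruncatedWittVector p (n + 1) (MvPolynomial (Fin d) k),
      wtN (twMap p (n + 1) φA x) = MvPolynomial.expand p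
        (MvPolynomial.map (twMap p (n + 1) (frobenius k p)) (wtN x)) := by
    intro x
    have hlift2 : ∀ i : Fin (n + 1), MvPolynomial.map res₁
        (MvPolynomial.expand p (MvPolynomial.map (twMap p (n + 1) (frobenius k p))
          (liftN (x.coeff i)))) = (twMap p (n + 1) φA x).coeff i := by
      intro i
      rw [WHD.twMap_coeff, hφA, MvPolynomial.map_expand, MvPolynomial.map_map, hcompF,
        ← MvPolynomial.map_map, hliftN, WHD.mv_expand_char]
    rw [hwtN (twMap p (n + 1) φA x) _ hlift2, hwtN_lift x]
    simp only [map_sum, map_mul, map_pow, map_natCast]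
  -- [P-B'] Frobenius compatibility at level n
  have hcompF' : res₀.comp (twMap p n (frobenius k p)) = (frobenius k p).comp res₀ := by
    refine RingHom.ext fun c => ?_
    rw [RingHom.comp_apply, RingHom.comp_apply, hres₀, hres₀, WHD.twMap_coeff]
  have hPB' : ∀ y : TruncatedWittVector p n (MvPolynomial (Fin d) k),
      wtN' (twMap p n φA y) = MvPolynomial.expand p
        (MvPolynomial.map (twMap p n (frobenius k p)) (wtN' y)) := by
    intro y
    have hlift2 : ∀ i : Fin n, MvPolynomial.map res₀
        (MvPolynomial.expand p (MvPolynomial.map (twMap p n (frobenius k p))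
          (MvPolynomial.map (TruncatedWittVector.truncate (Nat.le_succ n)) (liftN (y.coeff i)))))
          = (twMap p n φA y).coeff i := by
      intro i
      rw [WHD.twMap_coeff, hφA, MvPolynomial.map_expand, MvPolynomial.map_map, hcompF',
        ← MvPolynomial.map_map, hliftn, WHD.mv_expand_char]
    rw [hwtN' (twMap p n φA y) _ hlift2, hwtN'_lift y]
    simp only [map_sum, map_mul, map_pow, map_natCast]
  -- [P-A] restriction compatibility
  have hPA : ∀ x : TruncatedWittVector p (n + 1) (MvPolynomial (Fin d) k),
      MvPolynomial.map (TruncatedWittVector.truncate (Nat.le_succ n)) (wtN x)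
        = wtN' (twMap p n φA (TruncatedWittVector.truncate (Nat.le_succ n) x)) := by
    intro x
    have hlift2 : ∀ i : Fin n, MvPolynomial.map res₀
        ((MvPolynomial.map (TruncatedWittVector.truncate (Nat.le_succ n))
          (liftN (x.coeff (Fin.castLE (Nat.le_succ n) i)))) ^ p)
          = (twMap p n φA (TruncatedWittVector.truncate (Nat.le_succ n) x)).coeff i := by
      intro i
      rw [map_pow, hliftn, WHD.twMap_coeff, hφA, TruncatedWittVector.coeff_truncate]
    rw [hwtN' _ _ hlift2, hwtN_lift x]
    rw [map_sum, Fin.sum_univ_castSucc]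
    have hlast : MvPolynomial.map (TruncatedWittVector.truncate (Nat.le_succ n))
        ((p : MvPolynomial (Fin d) (TruncatedWittVector p (n + 1) k)) ^ ((Fin.last n : Fin (n+1)) : ℕ)
          * liftN (x.coeff (Fin.last n)) ^ p ^ (n - ((Fin.last n : Fin (n+1)) : ℕ))) = 0 := by
      rw [map_mul, map_pow, map_natCast]
      have : ((p : MvPolynomial (Fin d) (TruncatedWittVector p n k))) ^ ((Fin.last n : Fin (n+1)) : ℕ) = 0 := by
        rw [Fin.val_last]
        exact hAnp
      rw [this, zero_mul]
    rw [hlast, add_zero]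
    refine Finset.sum_congr rfl fun i _ => ?_
    have h1 : ((Fin.castSucc i : Fin (n + 1)) : ℕ) = (i : ℕ) := rfl
    have h2 : Fin.castSucc i = Fin.castLE (Nat.le_succ n) i := rfl
    have h3 : n - (i : ℕ) = (n - 1 - (i : ℕ)) + 1 := by have := i.isLt; omega
    rw [map_mul, map_pow, map_natCast, map_pow, h2]
    simp only [Fin.coe_castLE]
    rw [h3, pow_succ', pow_mul]
  -- kernel of the coefficient-restriction on polynomials
  have hker : ∀ a : MvPolynomial (Fin d) (TruncatedWittVector p (n + 1) k),
      MvPolynomial.map (TruncatedWittVector.truncate (Nat.le_succ n)) a = 0 →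
      ∃ b, a = (p : MvPolynomial (Fin d) (TruncatedWittVector p (n + 1) k)) ^ n * b := by
    intro a ha
    apply WHD.poly_p_pow_dvd
    intro e
    have h1 : ∀ s : Fin (n + 1), (s : ℕ) < n → (MvPolynomial.coeff e a).coeff s = 0 := by
      intro s hs
      have h2 : (TruncatedWittVector.truncate (Nat.le_succ n)
          (MvPolynomial.coeff e a)).coeff ⟨(s : ℕ), hs⟩ = 0 := by
        rw [← MvPolynomial.coeff_map, ha, MvPolynomial.coeff_zero]
        simp
      rw [TruncatedWittVector.coeff_truncate] at h2
      have h3 : Fin.castLE (Nat.le_succ n) ⟨(s : ℕ), hs⟩ = s := Fin.ext rfl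
      rwa [h3] at h2
    exact WHD.low_coeff_p_pow_dvd k _ n h1
  -- vIter coefficient lemmas
  have hvlt : ∀ (i : ℕ) {mm : ℕ} (z : TruncatedWittVector p mm (MvPolynomial (Fin d) k))
      (s : Fin (n + 1)), (s : ℕ) < i → (vIter p (n + 1) i z).coeff s = 0 := by
    intro i mm z s hs
    show (WittVector.truncate (n + 1) _).coeff s = 0
    rw [WittVector.coeff_truncate]
    exact WHD.iterate_verschiebung_coeff_lt _ hs
  have hvge : ∀ (i : ℕ) {mm : ℕ} (z : TruncatedWittVector p mm (MvPolynomial (Fin d) k))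
      (s : Fin (n + 1)) (l : ℕ) (hl : l < mm), (s : ℕ) = i + l →
      (vIter p (n + 1) i z).coeff s = z.coeff ⟨l, hl⟩ := by
    intro i mm z s l hl hsl
    show (WittVector.truncate (n + 1) _).coeff s = _
    rw [WittVector.coeff_truncate]
    show (WittVector.verschiebung^[i] z.out).coeff (s : ℕ) = _
    rw [show (s : ℕ) = l + i from by omega, WittVector.iterate_verschiebung_coeff]
    exact TruncatedWittVector.coeff_out z ⟨l, hl⟩
  refine ⟨?_, ?_, ?_, ?_⟩
  · -- (i) restriction
    intro x
    have hMinj : Function.Injective (MvPolynomial.map (twMap p n (frobenius k p)) :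
        MvPolynomial (Fin d) (TruncatedWittVector p n k) →
          MvPolynomial (Fin d) (TruncatedWittVector p n k)) :=
      MvPolynomial.map_injective _ (WHD.twMap_injective (frobenius k p).injective)
    have hS'zero' : ((p : TruncatedWittVector p n k)) ^ ((n - 1) + 1) = 0 := by
      rw [show n - 1 + 1 = n from by omega]
      exact hS'zero
    have key : MvPolynomial.expand p (MvPolynomial.map (twMap p n (frobenius k p))
        (wtN' (Dn_rp (TruncatedWittVector.truncate (Nat.le_succ n) x)))) =
      MvPolynomial.expand p (MvPolynomial.map (twMap p n (frobenius k p))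
        (wtN' (TruncatedWittVector.truncate (Nat.le_succ n) (DN_r x)))) := by
      calc MvPolynomial.expand p (MvPolynomial.map (twMap p n (frobenius k p))
          (wtN' (Dn_rp (TruncatedWittVector.truncate (Nat.le_succ n) x))))
          = (if p ∣ r then MvPolynomial.expand p (MvPolynomial.map (twMap p n (frobenius k p))
              (mvHasseDeriv (Finsupp.single j (r / p))
                (wtN' (TruncatedWittVector.truncate (Nat.le_succ n) x)))) else 0) := by
            rw [hDn_rp]
            by_cases hpr : p ∣ r
            · rw [if_pos hpr, if_pos hpr]
            · rw [if_neg hpr, if_neg hpr, map_zero, map_zero]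
        _ = mvHasseDeriv (Finsupp.single j r) (MvPolynomial.expand p
              (MvPolynomial.map (twMap p n (frobenius k p))
                (wtN' (TruncatedWittVector.truncate (Nat.le_succ n) x)))) :=
            (WHD.star hp' (twMap p n (frobenius k p)) hS'zero' j r _
              (hDvn (TruncatedWittVector.truncate (Nat.le_succ n) x))).symm
        _ = mvHasseDeriv (Finsupp.single j r)
              (wtN' (twMap p n φA (TruncatedWittVector.truncate (Nat.le_succ n) x))) := by
            rw [← hPB']
        _ = mvHasseDeriv (Finsupp.single j r)
              (MvPolynomial.map (TruncatedWittVector.truncate (Nat.le_succ n)) (wtN x)) := by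
            rw [← hPA]
        _ = MvPolynomial.map (TruncatedWittVector.truncate (Nat.le_succ n))
              (mvHasseDeriv (Finsupp.single j r) (wtN x)) := WHD.hasse_map _ j r (wtN x)
        _ = MvPolynomial.map (TruncatedWittVector.truncate (Nat.le_succ n)) (wtN (DN_r x)) := by
            rw [← hDN_r]
        _ = wtN' (twMap p n φA (TruncatedWittVector.truncate (Nat.le_succ n) (DN_r x))) :=
            hPA (DN_r x)
        _ = MvPolynomial.expand p (MvPolynomial.map (twMap p n (frobenius k p))
              (wtN' (TruncatedWittVector.truncate (Nat.le_succ n) (DN_r x)))) := hPB' _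
    exact hwtN'inj (hMinj (WHD.expand_injective key))
  · -- (ii) Frobenius
    intro x
    apply hwtNinj
    rw [hDN_r, hPB x, WHD.star hp' (twMap p (n + 1) (frobenius k p)) hSzero j r _ (hDvN x),
      hPB (DN_rp x), hDN_rp]
    by_cases hpr : p ∣ r
    · rw [if_pos hpr, if_pos hpr]
    · rw [if_neg hpr, if_neg hpr, map_zero, map_zero]
  · -- (iii) Verschiebung
    have hV : ∀ y : TruncatedWittVector p n (MvPolynomial (Fin d) k),
        wtN (vIter p (n + 1) 1 y) =
          (p : MvPolynomial (Fin d) (TruncatedWittVector p (n + 1) k)) *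
            ∑ i : Fin n, (p : MvPolynomial (Fin d) (TruncatedWittVector p (n + 1) k)) ^ (i : ℕ)
              * liftN (y.coeff i) ^ p ^ (n - 1 - (i : ℕ)) := by
      intro y
      have hg : ∀ i : Fin (n + 1), MvPolynomial.map res₁
          ((Fin.cases 0 (fun t : Fin n => liftN (y.coeff t)) :
            Fin (n + 1) → MvPolynomial (Fin d) (TruncatedWittVector p (n + 1) k)) i)
            = (vIter p (n + 1) 1 y).coeff i := by
        intro i
        induction i using Fin.cases with
        | zero =>
          simp only [Fin.cases_zero]
          rw [map_zero, hvlt 1 y 0 (by simp)]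
        | succ t =>
          simp only [Fin.cases_succ]
          rw [hvge 1 y t.succ (t : ℕ) t.isLt (by rw [Fin.val_succ]; omega)]
          exact hliftN _
      rw [hwtN _ _ hg, Fin.sum_univ_succ]
      simp only [Fin.cases_zero, Fin.cases_succ, Fin.val_zero, pow_zero, one_mul, Fin.val_succ]
      rw [zero_pow (pow_ne_zero _ hp'.pos.ne'), zero_add, Finset.mul_sum]
      refine Finset.sum_congr rfl fun i _ => ?_
      rw [show n - ((i : ℕ) + 1) = n - 1 - (i : ℕ) from by omega, pow_succ]
      ring
    have hU : ∀ y : TruncatedWittVector p n (MvPolynomial (Fin d) k),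
        MvPolynomial.map (TruncatedWittVector.truncate (Nat.le_succ n))
          (∑ i : Fin n, (p : MvPolynomial (Fin d) (TruncatedWittVector p (n + 1) k)) ^ (i : ℕ)
            * liftN (y.coeff i) ^ p ^ (n - 1 - (i : ℕ))) = wtN' y := by
      intro y
      rw [hwtN'_lift y]
      simp only [map_sum, map_mul, map_pow, map_natCast]
    intro y
    apply hwtNinj
    rw [hDN_r, hV y, hV (Dn_r y)]
    have h2 : MvPolynomial.map (TruncatedWittVector.truncate (Nat.le_succ n))
        ((∑ i : Fin n, (p : MvPolynomial (Fin d) (TruncatedWittVector p (n + 1) k)) ^ (i : ℕ)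
            * liftN ((Dn_r y).coeff i) ^ p ^ (n - 1 - (i : ℕ))) -
          mvHasseDeriv (Finsupp.single j r)
            (∑ i : Fin n, (p : MvPolynomial (Fin d) (TruncatedWittVector p (n + 1) k)) ^ (i : ℕ)
              * liftN (y.coeff i) ^ p ^ (n - 1 - (i : ℕ)))) = 0 := by
      rw [map_sub, hU (Dn_r y), hDn_r, ← WHD.hasse_map, hU y, sub_self]
    obtain ⟨b, hb⟩ := hker _ h2
    rw [WHD.hasse_natCast_mul j r p]
    linear_combination (-(p : MvPolynomial (Fin d) (TruncatedWittVector p (n + 1) k))) * hb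
      - b * hANp
  · -- (iv) image of Vⁱ
    intro i hi z
    set w := DN_r (vIter p (n + 1) i z) with hwdef
    have hg0 : ∀ s : Fin (n + 1), MvPolynomial.map res₁
        ((fun s : Fin (n + 1) => if (s : ℕ) < i then 0
          else liftN ((vIter p (n + 1) i z).coeff s)) s)
          = (vIter p (n + 1) i z).coeff s := by
      intro s
      by_cases hs : (s : ℕ) < i
      · simp only [if_pos hs]
        rw [map_zero, hvlt i z s hs]
      · simp only [if_neg hs]
        exact hliftN _
    have hdvd1 : (p : MvPolynomial (Fin d) (TruncatedWittVector p (n + 1) k)) ^ i ∣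
        wtN (vIter p (n + 1) i z) := by
      rw [hwtN _ _ hg0]
      refine Finset.dvd_sum fun s _ => ?_
      by_cases hs : (s : ℕ) < i
      · simp only [if_pos hs]
        rw [zero_pow (pow_ne_zero _ hp'.pos.ne'), mul_zero]
        exact dvd_zero _
      · exact Dvd.dvd.mul_right (pow_dvd_pow _ (by omega)) _
    obtain ⟨c₀, hc₀⟩ := hdvd1
    have hdvd2 : wtN w = (p : MvPolynomial (Fin d) (TruncatedWittVector p (n + 1) k)) ^ i *
        mvHasseDeriv (Finsupp.single j r) c₀ := by
      rw [hwdef, hDN_r, hc₀, ← Nat.cast_pow, WHD.hasse_natCast_mul, Nat.cast_pow]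
    have hvanish : ∀ l : ℕ, l ≤ i → ∀ s : Fin (n + 1), (s : ℕ) < l → w.coeff s = 0 := by
      intro l
      induction l with
      | zero => intro _ s hs; omega
      | succ l ih =>
        intro hli s hs
        have hPl : ∀ t : Fin (n + 1), (t : ℕ) < l → w.coeff t = 0 := ih (by omega)
        by_cases hsl : (s : ℕ) < l
        · exact hPl s hsl
        have hseq : (s : ℕ) = l := by omega
        have hln : l < n + 1 := by omega
        have hg : ∀ t : Fin (n + 1), MvPolynomial.map res₁
            ((fun t : Fin (n + 1) => if (t : ℕ) < l then 0 else liftN (w.coeff t)) t)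
            = w.coeff t := by
          intro t
          by_cases ht : (t : ℕ) < l
          · simp only [if_pos ht]
            rw [map_zero, hPl t ht]
          · simp only [if_neg ht]
            exact hliftN _
        have hsum := hwtN _ _ hg
        rw [← Finset.add_sum_erase _ _ (Finset.mem_univ (⟨l, hln⟩ : Fin (n + 1)))] at hsum
        have hrest : (p : MvPolynomial (Fin d) (TruncatedWittVector p (n + 1) k)) ^ (l + 1) ∣
            ∑ t ∈ Finset.univ.erase (⟨l, hln⟩ : Fin (n + 1)),
              (p : MvPolynomial (Fin d) (TruncatedWittVector p (n + 1) k)) ^ (t : ℕ) *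
                ((fun t : Fin (n + 1) => if (t : ℕ) < l then 0 else liftN (w.coeff t)) t)
                  ^ p ^ (n - (t : ℕ)) := by
          refine Finset.dvd_sum fun t htm => ?_
          rcases Finset.mem_erase.mp htm with ⟨htne, -⟩
          by_cases ht : (t : ℕ) < l
          · simp only [if_pos ht]
            rw [zero_pow (pow_ne_zero _ hp'.pos.ne'), mul_zero]
            exact dvd_zero _
          · have htl : (t : ℕ) ≠ l := fun hh => htne (Fin.ext hh)
            exact Dvd.dvd.mul_right (pow_dvd_pow _ (by omega)) _
        obtain ⟨cr, hcr⟩ := hrest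
        rw [hcr] at hsum
        rw [if_neg (show ¬ (((⟨l, hln⟩ : Fin (n + 1)) : ℕ) < l) from by simp)] at hsum
        -- hsum : wtN w = p^l * liftN (w.coeff ⟨l,hln⟩) ^ (p^(n - l)) + p^(l+1) * cr
        have heq : (p : MvPolynomial (Fin d) (TruncatedWittVector p (n + 1) k)) ^ l *
            (liftN (w.coeff ⟨l, hln⟩)) ^ p ^ (n - l) =
            (p : MvPolynomial (Fin d) (TruncatedWittVector p (n + 1) k)) ^ l *
              ((p : MvPolynomial (Fin d) (TruncatedWittVector p (n + 1) k)) *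
                ((p : MvPolynomial (Fin d) (TruncatedWittVector p (n + 1) k)) ^ (i - (l + 1)) *
                  mvHasseDeriv (Finsupp.single j r) c₀ - cr)) := by
          have h5 : (p : MvPolynomial (Fin d) (TruncatedWittVector p (n + 1) k)) ^ i =
              (p : MvPolynomial (Fin d) (TruncatedWittVector p (n + 1) k)) ^ (l + 1 + (i - (l + 1))) := by
            congr 1
            omega
          have h6 := hdvd2
          rw [hsum] at h6
          rw [h5, pow_add] at h6
          linear_combination h6
        have hred : MvPolynomial.map res₁ ((liftN (w.coeff ⟨l, hln⟩)) ^ p ^ (n - l)) = 0 := by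
          apply MvPolynomial.ext
          intro E
          rw [MvPolynomial.coeff_map, MvPolynomial.coeff_zero]
          have hceq := congrArg (MvPolynomial.coeff E) heq
          rw [hcoeffmul l, hcoeffmul l] at hceq
          have hinner : MvPolynomial.coeff E
              ((p : MvPolynomial (Fin d) (TruncatedWittVector p (n + 1) k)) *
                ((p : MvPolynomial (Fin d) (TruncatedWittVector p (n + 1) k)) ^ (i - (l + 1)) *
                  mvHasseDeriv (Finsupp.single j r) c₀ - cr)) =
              (p : TruncatedWittVector p (n + 1) k) * MvPolynomial.coeff E
                ((p : MvPolynomial (Fin d) (TruncatedWittVector p (n + 1) k)) ^ (i - (l + 1)) *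
                  mvHasseDeriv (Finsupp.single j r) c₀ - cr) := by
            simpa only [pow_one] using hcoeffmul 1 _ E
          rw [hinner] at hceq
          have hann : (p : TruncatedWittVector p (n + 1) k) ^ l *
              (MvPolynomial.coeff E ((liftN (w.coeff ⟨l, hln⟩)) ^ p ^ (n - l)) -
                (p : TruncatedWittVector p (n + 1) k) * MvPolynomial.coeff E
                  ((p : MvPolynomial (Fin d) (TruncatedWittVector p (n + 1) k)) ^ (i - (l + 1)) *
                    mvHasseDeriv (Finsupp.single j r) c₀ - cr)) = 0 := by
            rw [mul_sub, hceq]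
            ring
          have h0 := WHD.ann_p_pow (show l < n + 1 by omega) _ hann 0 rfl
          rw [← hres₁, map_sub, map_mul, map_natCast, CharP.cast_eq_zero k p, zero_mul,
            sub_zero] at h0
          exact h0
        have h7 : (MvPolynomial.map res₁ (liftN (w.coeff ⟨l, hln⟩))) ^ p ^ (n - l) = 0 := by
          rw [← map_pow, hred]
        have h8 : MvPolynomial.map res₁ (liftN (w.coeff ⟨l, hln⟩)) = 0 :=
          (pow_eq_zero_iff (pow_ne_zero _ hp'.pos.ne')).mp h7
        rw [hliftN] at h8
        have hssl : s = (⟨l, hln⟩ : Fin (n + 1)) := Fin.ext hseq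
        rw [hssl]
        exact h8
    refine ⟨WittVector.truncate (n + 1 - i) (WittVector.mk p
      (fun l => w.out.coeff (i + l))), ?_⟩
    apply TruncatedWittVector.ext
    intro s
    show w.coeff s = _
    by_cases hs : (s : ℕ) < i
    · rw [hvanish i (le_refl i) s hs, hvlt i _ s hs]
    · have hl2 : (s : ℕ) - i < n + 1 - i := by have := s.isLt; omega
      rw [hvge i _ s ((s : ℕ) - i) hl2 (by omega)]
      rw [WittVector.coeff_truncate, WittVector.coeff_mk]
      rw [show i + ((s : ℕ) - i) = (s : ℕ) from by omega]
      exact (TruncatedWittVector.coeff_out _ s).symm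
end
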